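/- arXiv:1509.05275 — 6 statements merged into one kernel-verified Lean document; each statement's English description precedes it below -/
import Mathlib

section
/- Let G be an abelian group, A a G-graded algebra over an algebraically closed field F, and V a finite-dimensional simple A-module. If Γ and Γ′ are two G-gradings on the vector space V each making V a G-graded A-module (i.e. A_g · V_h ⊆ V_{gh}), then there exists d ∈ G such that Γ′ is the right shift of Γ by d, i.e. V′_{gd} = V_g for all g ∈ G. -/
/-! For `d ∈ G` the operator `P_d = ∑_g π'_{gd} ∘ π_g` (with `π`, `π'` the homogeneous projections
of the two gradings) commutes with the action of `A`, so by Schur's lemma it is a scalar `c_d`.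
Choosing `d` so that `P_d v ≠ 0` for some homogeneous `v`, idempotency of `π'_{gd}` forces
`c_d = 1`, i.e. `Γ g ≤ Γ' (g * d)` for all `g`; two complete independent families of subspaces
that are comparable in this way must coincide. -/

open DirectSum

theorem exists_eq_smul_of_map_smul {F A V : Type*} [Field F] [IsAlgClosed F] [Ring A]
    [Algebra F A] [AddCommGroup V] [Module A V] [Module F V] [IsScalarTower F A V]
    [FiniteDimensional F V] [IsSimpleModule A V] (f : V →ₗ[F] V) (hf : ∀ (a : A) (v : V), f (a • v) = a • f v) :
    ∃ c : F, ∀ v, f v = c • v := by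
  have : Nontrivial V := IsSimpleModule.nontrivial A V
  obtain ⟨c, hc⟩ := Module.End.exists_eigenvalue f
  obtain ⟨w, hw⟩ := hc.exists_hasEigenvector
  let E : Submodule A V :=
    { carrier := {u | f u = c • u}
      add_mem' := fun {x y} (hx : f x = c • x) (hy : f y = c • y) => by
        simp only [Set.mem_ofPred_eq, map_add, hx, hy, smul_add]
      zero_mem' := by simp
      smul_mem' := fun a u (hu : f u = c • u) => by
        simp only [Set.mem_ofPred_eq, hf, hu, smul_comm a c u] }
  have hE : E = ⊤ := (eq_bot_or_eq_top E).resolve_left fun h =>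
    hw.right ((Submodule.mem_bot A).mp (h ▸ hw.apply_eq_smul : w ∈ (⊥ : Submodule A V)))
  exact ⟨c, fun v => (hE ▸ Submodule.mem_top : v ∈ E)⟩

theorem DirectSum.exists_decompose_ne_zero {ι R M : Type*} [DecidableEq ι] [Semiring R]
    [AddCommMonoid M] [Module R M] (ℳ : ι → Submodule R M) [Decomposition ℳ] {x : M}
    (hx : x ≠ 0) : ∃ i, (decompose ℳ x i : M) ≠ 0 := by
  contrapose! hx
  have : decompose ℳ x = 0 := DFinsupp.ext fun i => Subtype.ext (hx i)
  simpa using congrArg (decompose ℳ).symm this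

section Graded

variable {R A V G : Type*} [CommSemiring R] [Semiring A] [Module R A] [AddCommMonoid V]
  [Module A V] [Module R V] [Group G]

def IsGradedSMul (𝒜 : G → Submodule R A) (Γ : G → Submodule R V) : Prop :=
  ∀ (g h : G) (a : A) (v : V), a ∈ 𝒜 g → v ∈ Γ h → a • v ∈ Γ (g * h)

variable [DecidableEq G] {𝒜 : G → Submodule R A} {Γ Γ' : G → Submodule R V}

theorem IsGradedSMul.decompose_smul_of_mem [Decomposition Γ] (hΓ : IsGradedSMul 𝒜 Γ)
    {g : G} {a : A} (ha : a ∈ 𝒜 g) (h : G) (v : V) :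
    (decompose Γ (a • v) (g * h) : V) = a • (decompose Γ v h : V) := by
  induction v using Decomposition.inductionOn Γ with
  | zero => simp
  | @homogeneous k w =>
    have haw := hΓ g k a w ha w.2
    obtain rfl | hk := eq_or_ne k h
    · rw [decompose_of_mem_same Γ haw, decompose_of_mem_same Γ w.2]
    · rw [decompose_of_mem_ne Γ haw (mul_left_cancel_iff.not.mpr hk),
        decompose_of_mem_ne Γ w.2 hk, smul_zero]
  | add x y hx hy => simp [smul_add, hx, hy]

variable (Γ Γ') in
/-- The operator `P_d = ∑_g π'_{gd} ∘ π_g`. -/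
noncomputable def shiftComponent [Decomposition Γ] [Decomposition Γ'] (d : G) : V →ₗ[R] V :=
  toModule R G V (fun g => (Γ' (g * d)).subtype ∘ₗ component R G (Γ' ·) (g * d) ∘ₗ
    (decomposeLinearEquiv Γ').toLinearMap ∘ₗ (Γ g).subtype) ∘ₗ
    (decomposeLinearEquiv Γ).toLinearMap

theorem shiftComponent_apply_of_mem [Decomposition Γ] [Decomposition Γ'] {d g : G} {v : V}
    (hv : v ∈ Γ g) : shiftComponent Γ Γ' d v = decompose Γ' v (g * d) := by
  simp only [shiftComponent, LinearMap.coe_comp, LinearEquiv.coe_coe, Function.comp_apply,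
    decomposeLinearEquiv_apply, decompose_of_mem Γ hv, ← lof_eq_of R, toModule_lof,
    Submodule.coe_subtype]
  rfl

theorem IsGradedSMul.shiftComponent_smul [Decomposition Γ] [Decomposition Γ']
    (h𝒜 : ⨆ g, 𝒜 g = ⊤) (hΓ : IsGradedSMul 𝒜 Γ) (hΓ' : IsGradedSMul 𝒜 Γ') (d : G) (a : A)
    (v : V) : shiftComponent Γ Γ' d (a • v) = a • shiftComponent Γ Γ' d v := by
  have ha : a ∈ ⨆ g, 𝒜 g := h𝒜 ▸ Submodule.mem_top
  induction ha using Submodule.iSup_induction' with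
  | zero => simp
  | add a b _ _ iha ihb => rw [add_smul, add_smul, map_add, iha, ihb]
  | mem g a ha =>
    induction v using Decomposition.inductionOn Γ with
    | zero => simp
    | add x y hx hy => rw [smul_add, map_add, map_add, smul_add, hx, hy]
    | @homogeneous k w =>
      rw [shiftComponent_apply_of_mem (hΓ g k a w ha w.2), shiftComponent_apply_of_mem w.2,
        mul_assoc, hΓ'.decompose_smul_of_mem ha]

end Graded

theorem exists_shift_le {F A V G : Type*} [Field F] [IsAlgClosed F] [Ring A] [Algebra F A]
    [AddCommGroup V] [Module A V] [Module F V] [IsScalarTower F A V] [FiniteDimensional F V]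
    [IsSimpleModule A V] [Group G] [DecidableEq G] {𝒜 : G → Submodule F A}
    {Γ Γ' : G → Submodule F V} [Decomposition Γ] [Decomposition Γ'] (h𝒜 : ⨆ g, 𝒜 g = ⊤)
    (hΓ : IsGradedSMul 𝒜 Γ) (hΓ' : IsGradedSMul 𝒜 Γ') : ∃ d, ∀ g, Γ g ≤ Γ' (g * d) := by
  have : Nontrivial V := IsSimpleModule.nontrivial A V
  obtain ⟨x, hx⟩ := exists_ne (0 : V)
  obtain ⟨g₀, hv⟩ := exists_decompose_ne_zero Γ hx
  set v : V := (decompose Γ x g₀ : V)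
  obtain ⟨k, hw⟩ := exists_decompose_ne_zero Γ' hv
  set w : V := (decompose Γ' v k : V)
  set d := g₀⁻¹ * k
  obtain ⟨c, hc⟩ := exists_eq_smul_of_map_smul (shiftComponent Γ Γ' d)
    (hΓ.shiftComponent_smul h𝒜 hΓ' d)
  have hPv : shiftComponent Γ Γ' d v = w := by
    rw [shiftComponent_apply_of_mem (decompose Γ x g₀).2, mul_inv_cancel_left]
  have hc1 : c = 1 := by
    have hcw : c • w = w := by
      calc c • w = (decompose Γ' (c • v) k : V) := by rw [decompose_smul]; rfl
        _ = (decompose Γ' w k : V) := by rw [← hc, hPv]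
        _ = w := decompose_of_mem_same Γ' (decompose Γ' v k).2
    exact smul_left_injective F hw (hcw.trans (one_smul F w).symm)
  refine ⟨d, fun g u hu => ?_⟩
  have hu' : shiftComponent Γ Γ' d u = u := by rw [hc, hc1, one_smul]
  rw [← hu', shiftComponent_apply_of_mem hu]
  exact (decompose Γ' u (g * d)).2

theorem stmt_7_general (F : Type*) [Field F] [IsAlgClosed F] (G : Type*) [CommGroup G]
    (A : Type*) [Ring A] [Algebra F A]
    (𝒜 : G → Submodule F A)
    (h𝒜top : (⨆ g, 𝒜 g) = ⊤)
    (V : Type*) [AddCommGroup V] [Module A V] [Module F V] [IsScalarTower F A V]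
    [FiniteDimensional F V] [IsSimpleModule A V]
    (Γ Γ' : G → Submodule F V)
    (hΓtop : (⨆ g, Γ g) = ⊤) (hΓind : iSupIndep Γ)
    (hΓ'top : (⨆ g, Γ' g) = ⊤) (hΓ'ind : iSupIndep Γ')
    (hΓmod : ∀ (g h : G) (a : A) (v : V), a ∈ 𝒜 g → v ∈ Γ h → a • v ∈ Γ (g * h))
    (hΓ'mod : ∀ (g h : G) (a : A) (v : V), a ∈ 𝒜 g → v ∈ Γ' h → a • v ∈ Γ' (g * h)) :
    ∃ d : G, ∀ g : G, Γ' (g * d) = Γ g := by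
  classical
  let := ((isInternal_submodule_iff_iSupIndep_and_iSup_eq_top Γ).mpr
    ⟨hΓind, hΓtop⟩).chooseDecomposition
  let := ((isInternal_submodule_iff_iSupIndep_and_iSup_eq_top Γ').mpr
    ⟨hΓ'ind, hΓ'top⟩).chooseDecomposition
  obtain ⟨d, hd⟩ := exists_shift_le h𝒜top hΓmod hΓ'mod
  have hΓ'dind : iSupIndep fun g => Γ' (g * d) := hΓ'ind.comp (mul_left_injective d)
  exact ⟨d, fun g => congrFun ((hΓ'dind.le_iff_eq_of_iSup_eq_top hΓtop).mp hd).symm g⟩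

/-- Let `A` be a `G`-graded algebra over an algebraically closed field `F`
and `V` a finite-dimensional simple `A`-module.  Any two `G`-gradings on `V` making it a
graded `A`-module differ by a shift: there is `d ∈ G` with `Γ'_{gd} = Γ_g` for all `g`. -/
theorem stmt_7 (F : Type*) [Field F] [IsAlgClosed F] (G : Type*) [CommGroup G]
    (A : Type*) [Ring A] [Algebra F A]
    (𝒜 : G → Submodule F A)
    (h𝒜mul : ∀ (g h : G) (a b : A), a ∈ 𝒜 g → b ∈ 𝒜 h → a * b ∈ 𝒜 (g * h))
    (h𝒜top : (⨆ g, 𝒜 g) = ⊤) (h𝒜ind : iSupIndep 𝒜)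
    (V : Type*) [AddCommGroup V] [Module A V] [Module F V] [IsScalarTower F A V]
    [FiniteDimensional F V] [IsSimpleModule A V]
    (Γ Γ' : G → Submodule F V)
    (hΓtop : (⨆ g, Γ g) = ⊤) (hΓind : iSupIndep Γ)
    (hΓ'top : (⨆ g, Γ' g) = ⊤) (hΓ'ind : iSupIndep Γ')
    (hΓmod : ∀ (g h : G) (a : A) (v : V), a ∈ 𝒜 g → v ∈ Γ h → a • v ∈ Γ (g * h))
    (hΓ'mod : ∀ (g h : G) (a : A) (v : V), a ∈ 𝒜 g → v ∈ Γ' h → a • v ∈ Γ' (g * h)) :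
    ∃ d : G, ∀ g : G, Γ' (g * d) = Γ g :=
  stmt_7_general F G A 𝒜 h𝒜top V Γ Γ' hΓtop hΓind hΓ'top hΓ'ind hΓmod hΓ'mod
end

section
/- Let V be a finite-dimensional vector space over an algebraically closed field and let Γ, Γ′ be two gradings of V by an abelian group G that induce the same G-grading on End(V) (where a linear map T has degree h if T(V_g) ⊆ V_{hg} for all g). Then Γ′ is a shift of Γ: there exists d ∈ G with V′_{gd} = V_g for all g. -/
/-!
Rank-one operators detect the grading. If `v ∈ V_i` is nonzero and `φ` is a functional with
`φ v = 1` vanishing on the other components, then for homogeneous `w ∈ V_k` the operator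
`x ↦ φ x • w` has degree `k i⁻¹` for `Γ`, hence also for `Γ'`. Applied to a vector `v` that
is homogeneous for both gradings, say `v ∈ V_i ∩ V'_j`, this puts every `w ∈ V_k` into
`V'_{k i⁻¹ j}`, so `V_k ≤ V'_{k d}` with `d = i⁻¹ j`; the same argument with the gradings
swapped gives the reverse inclusion. Such a doubly homogeneous vector is the image of a
suitable `V'_j` under the rank-one projection onto the line through any nonzero homogeneous
`u ∈ V_i`, which has degree `1`.
-/

section Gradings

variable {F V G : Type*} [Field F] [AddCommGroup V] [Module F V] [Group G]

def IsOfDegree (Γ : G → Submodule F V) (h : G) (T : V →ₗ[F] V) : Prop :=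
  ∀ g, ∀ v ∈ Γ g, T v ∈ Γ (h * g)

theorem iSupIndep.exists_dual_eq_one_of_mem {ι : Type*} {Γ : ι → Submodule F V}
    (hind : iSupIndep Γ) {i : ι} {v : V} (hv : v ∈ Γ i) (hv0 : v ≠ 0) :
    ∃ φ : Module.Dual F V, φ v = 1 ∧ ∀ j ≠ i, ∀ x ∈ Γ j, φ x = 0 := by
  have hvW : v ∉ ⨆ (j) (_ : j ≠ i), Γ j := fun hvW =>
    hv0 ((Submodule.disjoint_def.mp (hind i)) v hv hvW)
  obtain ⟨f, hfv, hfW⟩ := Submodule.exists_dual_map_eq_bot_of_notMem hvW inferInstance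
  refine ⟨(f v)⁻¹ • f, by simp [hfv], fun j hj x hx => ?_⟩
  have hxW : x ∈ ⨆ (j) (_ : j ≠ i), Γ j :=
    Submodule.mem_iSup_of_mem j (Submodule.mem_iSup_of_mem hj hx)
  have hfx : f x ∈ (⨆ (j) (_ : j ≠ i), Γ j).map f := Submodule.mem_map_of_mem hxW
  simp_all

variable {Γ Γ' : G → Submodule F V}

theorem isOfDegree_smulRight {i k : G} {φ : Module.Dual F V}
    (hφ : ∀ j ≠ i, ∀ x ∈ Γ j, φ x = 0) {w : V} (hw : w ∈ Γ k) :
    IsOfDegree Γ (k * i⁻¹) (φ.smulRight w) := by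
  intro g x hx
  by_cases hg : g = i
  · subst hg
    simpa using Submodule.smul_mem _ (φ x) hw
  · simp [hφ g hg x hx]

theorem mem_of_isOfDegree_imp (hind : iSupIndep Γ)
    (htransfer : ∀ h T, IsOfDegree Γ h T → IsOfDegree Γ' h T)
    {i j k : G} {v : V} (hv : v ∈ Γ i) (hv' : v ∈ Γ' j) (hv0 : v ≠ 0)
    {w : V} (hw : w ∈ Γ k) :
    w ∈ Γ' (k * i⁻¹ * j) := by
  obtain ⟨φ, hφv, hφ⟩ := hind.exists_dual_eq_one_of_mem hv hv0
  simpa [hφv] using htransfer _ _ (isOfDegree_smulRight hφ hw) j v hv'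

theorem exists_mem_mem_ne_zero_of_isOfDegree_imp (hind : iSupIndep Γ) (htop' : ⨆ g, Γ' g = ⊤)
    (htransfer : ∀ h T, IsOfDegree Γ h T → IsOfDegree Γ' h T)
    {i : G} {u : V} (hu : u ∈ Γ i) (hu0 : u ≠ 0) :
    ∃ j, ∃ v ∈ Γ i, v ∈ Γ' j ∧ v ≠ 0 := by
  obtain ⟨φ, hφu, hφ⟩ := hind.exists_dual_eq_one_of_mem hu hu0
  have hdeg : IsOfDegree Γ' 1 (φ.smulRight u) := by
    simpa using htransfer _ _ (isOfDegree_smulRight hφ hu)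
  by_contra! hnone
  have hker : ∀ j, Γ' j ≤ LinearMap.ker (φ.smulRight u) := fun j x hx =>
    LinearMap.mem_ker.mpr (hnone j _ (Submodule.smul_mem _ (φ x) hu) (by simpa using hdeg j x hx))
  have hker_top : ⊤ ≤ LinearMap.ker (φ.smulRight u) := htop' ▸ iSup_le hker
  have hu_ker : u ∈ LinearMap.ker (φ.smulRight u) := hker_top Submodule.mem_top
  simp [hφu, hu0] at hu_ker

end Gradings

theorem stmt_8_general (F : Type*) [Field F] (G : Type*) [CommGroup G]
    (V : Type*) [AddCommGroup V] [Module F V]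
    (Γ Γ' : G → Submodule F V)
    (hΓtop : (⨆ g, Γ g) = ⊤) (hΓind : iSupIndep Γ)
    (hΓ'top : (⨆ g, Γ' g) = ⊤) (hΓ'ind : iSupIndep Γ')
    (hsame : ∀ h : G,
      {T : V →ₗ[F] V | ∀ (g : G), ∀ v ∈ Γ g, T v ∈ Γ (h * g)} =
      {T : V →ₗ[F] V | ∀ (g : G), ∀ v ∈ Γ' g, T v ∈ Γ' (h * g)}) :
    ∃ d : G, ∀ g : G, Γ' (g * d) = Γ g := by
  have hiff : ∀ h T, IsOfDegree Γ h T ↔ IsOfDegree Γ' h T := fun h T =>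
    Set.ext_iff.mp (hsame h) T
  by_cases hV : ∀ i, Γ i = ⊥
  · have htop_bot : (⊤ : Submodule F V) = ⊥ := by simp [← hΓtop, hV]
    exact ⟨1, fun g => by rw [hV g, eq_bot_iff, ← htop_bot]; exact le_top⟩
  obtain ⟨i, hi⟩ := not_forall.mp hV
  obtain ⟨u, hu, hu0⟩ := Submodule.exists_mem_ne_zero_of_ne_bot hi
  obtain ⟨j, v, hv, hv', hv0⟩ :=
    exists_mem_mem_ne_zero_of_isOfDegree_imp hΓind hΓ'top (fun h T => (hiff h T).mp) hu hu0
  refine ⟨i⁻¹ * j, fun g => le_antisymm (fun w hw => ?_) (fun w hw => ?_)⟩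
  · simpa [mul_assoc] using mem_of_isOfDegree_imp hΓ'ind (fun h T => (hiff h T).mpr) hv' hv hv0 hw
  · simpa [mul_assoc] using mem_of_isOfDegree_imp hΓind (fun h T => (hiff h T).mp) hv hv' hv0 hw

/-- If two `G`-gradings `Γ, Γ'` of a finite-dimensional vector space `V`
over an algebraically closed field induce the same `G`-grading on `End(V)` (where `T`
has degree `h` iff `T(V_g) ⊆ V_{hg}` for all `g`), then `Γ'` is a shift of `Γ`. -/
theorem stmt_8 (F : Type*) [Field F] [IsAlgClosed F] (G : Type*) [CommGroup G]
    (V : Type*) [AddCommGroup V] [Module F V] [FiniteDimensional F V]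
    (Γ Γ' : G → Submodule F V)
    (hΓtop : (⨆ g, Γ g) = ⊤) (hΓind : iSupIndep Γ)
    (hΓ'top : (⨆ g, Γ' g) = ⊤) (hΓ'ind : iSupIndep Γ')
    (hsame : ∀ h : G,
      {T : V →ₗ[F] V | ∀ (g : G), ∀ v ∈ Γ g, T v ∈ Γ (h * g)} =
      {T : V →ₗ[F] V | ∀ (g : G), ∀ v ∈ Γ' g, T v ∈ Γ' (h * g)}) :
    ∃ d : G, ∀ g : G, Γ' (g * d) = Γ g :=
  stmt_8_general F G V Γ Γ' hΓtop hΓind hΓ'top hΓ'ind hsame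
end

section
/- Let F be a field containing a square root i of -1, with char F ≠ 2, char F ∤ n+1, n ≥ 2, and Q = Q(n) the Lie superalgebra with Q⁰ = Q¹ = 𝔰𝔩(n+1,F). The map φ(a + b̲) = -aᵗ + i·(-bᵗ)̲ is an automorphism of Q, and φ² is the parity automorphism υ (identity on Q⁰, minus identity on Q¹); in particular φ has order 4. -/
/-
Write `ψ_c(a) = c • (-aᵀ)`, so that `φ = ψ_1 × ψ_i`. Since transposition reverses products,
`ψ_c(a) ψ_d(b) = (cd) • (ba)ᵀ`: commutators are sent to `-(ab - ba)ᵀ` times the product of the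
scalars, and because `i² = -1` the anticommutator of two odd elements is sent to
`-(ab + ba)ᵀ = ψ_1(ab + ba)`. As the trace-removal `♯` commutes with `ψ_1`, `φ` preserves the
bracket. Moreover `ψ_c ∘ ψ_d = ψ_{cd}`, so `φ² = ψ_1 × ψ_{-1} = υ`; and `υ ≠ id` on `Q¹`
because a traceless off-diagonal matrix unit `E` satisfies `-E ≠ E` when `char F ≠ 2`.
-/

open Matrix

abbrev QMat (F : Type*) [Field F] (n : ℕ) :=
  Matrix (Fin (n + 1)) (Fin (n + 1)) F × Matrix (Fin (n + 1)) (Fin (n + 1)) F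

namespace Matrix

section

variable {m R : Type*} [CommRing R]

theorem smul_neg_transpose_smul_neg_transpose (c d : R) (a : Matrix m m R) :
    c • -(d • -aᵀ)ᵀ = (c * d) • a := by
  simp only [transpose_smul, transpose_neg, transpose_transpose, smul_neg, neg_neg, smul_smul]

variable [Fintype m]

theorem smul_neg_transpose_mul_smul_neg_transpose (c d : R) (a b : Matrix m m R) :
    (c • -aᵀ) * (d • -bᵀ) = (c * d) • (b * a)ᵀ := by
  rw [transpose_mul, smul_mul_smul_comm, neg_mul_neg]

variable [DecidableEq m]

theorem neg_transpose_sub_trace_smul_one (c : R) (a : Matrix m m R) :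
    -aᵀ - (c * trace (-aᵀ)) • (1 : Matrix m m R) = -(a - (c * trace a) • 1)ᵀ := by
  rw [trace_neg, trace_transpose, transpose_sub, transpose_smul, transpose_one, mul_neg,
    neg_smul]
  abel

theorem exists_trace_eq_zero_neg_ne [Nontrivial m] [Nontrivial R] (hR : ringChar R ≠ 2) :
    ∃ E : Matrix m m R, trace E = 0 ∧ -E ≠ E := by
  obtain ⟨j, k, hjk⟩ := exists_pair_ne m
  refine ⟨single j k 1, trace_single_eq_of_ne j k 1 hjk, fun h => hR ?_⟩
  have hentry := congrFun (congrFun h j) k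
  rwa [neg_apply, single_apply_same, neg_one_eq_one_iff] at hentry

end

end Matrix

theorem stmt_12_general (F : Type*) [Field F] (h2 : ringChar F ≠ 2)
    (n : ℕ) (hn : 2 ≤ n)
    (i : F) (hi : i ^ 2 = -1)
    (sharp : Matrix (Fin (n + 1)) (Fin (n + 1)) F → Matrix (Fin (n + 1)) (Fin (n + 1)) F)
    (hsharp : ∀ a, sharp a = a - ((n + 1 : F)⁻¹ * Matrix.trace a) • (1 : Matrix (Fin (n + 1)) (Fin (n + 1)) F))
    (B : QMat F n → QMat F n → QMat F n)
    (hB : ∀ p q, B p q = (p.1 * q.1 - q.1 * p.1 + sharp (p.2 * q.2 + q.2 * p.2),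
      p.1 * q.2 - q.2 * p.1 + p.2 * q.1 - q.1 * p.2))
    (φ : QMat F n → QMat F n)
    (hφ : ∀ p, φ p = (-(p.1)ᵀ, i • (-(p.2)ᵀ))) :
    -- φ is an automorphism of Q:
    (∀ p q, φ (p + q) = φ p + φ q) ∧ (∀ (c : F) p, φ (c • p) = c • φ p) ∧
    (∀ p : QMat F n, Matrix.trace p.1 = 0 → Matrix.trace p.2 = 0 →
      Matrix.trace (φ p).1 = 0 ∧ Matrix.trace (φ p).2 = 0) ∧
    (∀ q : QMat F n, Matrix.trace q.1 = 0 → Matrix.trace q.2 = 0 →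
      ∃ p : QMat F n, Matrix.trace p.1 = 0 ∧ Matrix.trace p.2 = 0 ∧ φ p = q) ∧
    Function.Injective φ ∧
    (∀ a, (φ (a, 0)).2 = 0) ∧ (∀ x, (φ (0, x)).1 = 0) ∧
    (∀ p q : QMat F n, Matrix.trace p.1 = 0 → Matrix.trace p.2 = 0 →
      Matrix.trace q.1 = 0 → Matrix.trace q.2 = 0 → φ (B p q) = B (φ p) (φ q)) ∧
    -- φ² is the parity automorphism υ
    (∀ p : QMat F n, φ (φ p) = (p.1, -p.2)) ∧
    -- in particular φ has order 4
    (∀ p : QMat F n, φ (φ (φ (φ p))) = p) ∧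
    ¬ (∀ p : QMat F n, Matrix.trace p.1 = 0 → Matrix.trace p.2 = 0 → φ (φ p) = p) := by
  have hii : i * i = -1 := by rw [← sq, hi]
  have hsq : ∀ p, φ (φ p) = (p.1, -p.2) := fun p => by
    simp only [hφ, transpose_neg, transpose_transpose, neg_neg,
      smul_neg_transpose_smul_neg_transpose, hii, neg_one_smul]
  have h4 : ∀ p, φ (φ (φ (φ p))) = p := fun p => by rw [hsq, hsq, neg_neg]
  refine ⟨fun p q => ?_, fun c p => ?_, fun p h₁ h₂ => by simp [hφ, h₁, h₂],
    fun q h₁ h₂ => ⟨φ (φ (φ q)), by simp [hφ, h₁], by simp [hφ, h₂], h4 q⟩,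
    fun p q h => by simpa only [h4] using congrArg (fun p => φ (φ (φ p))) h,
    fun a => by simp [hφ], fun x => by simp [hφ], fun p q _ _ _ _ => ?_, hsq, h4, fun H => ?_⟩
  · simp only [hφ, Prod.fst_add, Prod.snd_add, transpose_add, neg_add, smul_add, Prod.mk_add_mk]
  · simp only [hφ, Prod.smul_fst, Prod.smul_snd, transpose_smul, smul_neg, smul_comm c i,
      Prod.smul_mk]
  · have hodd : (i • -p.2ᵀ) * (i • -q.2ᵀ) + (i • -q.2ᵀ) * (i • -p.2ᵀ) =
        -(p.2 * q.2 + q.2 * p.2)ᵀ := by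
      rw [smul_neg_transpose_mul_smul_neg_transpose, smul_neg_transpose_mul_smul_neg_transpose,
        hii, transpose_add]
      module
    simp only [hφ, hB, hodd, hsharp, neg_transpose_sub_trace_smul_one]
    simp only [transpose_add, transpose_sub, transpose_mul, Matrix.mul_smul,
      Matrix.smul_mul, neg_mul, mul_neg, smul_neg, Prod.mk.injEq]
    constructor <;> module
  · have : Nontrivial (Fin (n + 1)) := Fin.nontrivial_iff_two_le.mpr (by omega)
    obtain ⟨E, hE, hEneg⟩ := exists_trace_eq_zero_neg_ne (R := F) (m := Fin (n + 1)) h2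
    have hfix := H (0, E) (by simp) hE
    rw [hsq] at hfix
    exact hEneg (congrArg Prod.snd hfix)

/-- If `i² = -1` in `F`, the map `φ(a + b̲) = -aᵗ + i·(-bᵗ)̲` is an
automorphism of the Lie superalgebra `Q(n)`, `φ²` is the parity automorphism `υ`, and
`φ` has order 4. -/
theorem stmt_12 (F : Type*) [Field F] (h2 : ringChar F ≠ 2)
    (n : ℕ) (hn : 2 ≤ n) (hchar : (n + 1 : F) ≠ 0)
    (i : F) (hi : i ^ 2 = -1)
    (sharp : Matrix (Fin (n + 1)) (Fin (n + 1)) F → Matrix (Fin (n + 1)) (Fin (n + 1)) F)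
    (hsharp : ∀ a, sharp a = a - ((n + 1 : F)⁻¹ * Matrix.trace a) • (1 : Matrix (Fin (n + 1)) (Fin (n + 1)) F))
    (B : QMat F n → QMat F n → QMat F n)
    (hB : ∀ p q, B p q = (p.1 * q.1 - q.1 * p.1 + sharp (p.2 * q.2 + q.2 * p.2),
      p.1 * q.2 - q.2 * p.1 + p.2 * q.1 - q.1 * p.2))
    (φ : QMat F n → QMat F n)
    (hφ : ∀ p, φ p = (-(p.1)ᵀ, i • (-(p.2)ᵀ))) :
    -- φ is an automorphism of Q:
    (∀ p q, φ (p + q) = φ p + φ q) ∧ (∀ (c : F) p, φ (c • p) = c • φ p) ∧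
    (∀ p : QMat F n, Matrix.trace p.1 = 0 → Matrix.trace p.2 = 0 →
      Matrix.trace (φ p).1 = 0 ∧ Matrix.trace (φ p).2 = 0) ∧
    (∀ q : QMat F n, Matrix.trace q.1 = 0 → Matrix.trace q.2 = 0 →
      ∃ p : QMat F n, Matrix.trace p.1 = 0 ∧ Matrix.trace p.2 = 0 ∧ φ p = q) ∧
    Function.Injective φ ∧
    (∀ a, (φ (a, 0)).2 = 0) ∧ (∀ x, (φ (0, x)).1 = 0) ∧
    (∀ p q : QMat F n, Matrix.trace p.1 = 0 → Matrix.trace p.2 = 0 →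
      Matrix.trace q.1 = 0 → Matrix.trace q.2 = 0 → φ (B p q) = B (φ p) (φ q)) ∧
    -- φ² is the parity automorphism υ
    (∀ p : QMat F n, φ (φ p) = (p.1, -p.2)) ∧
    -- in particular φ has order 4
    (∀ p : QMat F n, φ (φ (φ (φ p))) = p) ∧
    ¬ (∀ p : QMat F n, Matrix.trace p.1 = 0 → Matrix.trace p.2 = 0 → φ (φ p) = p) :=
  stmt_12_general F h2 n hn i hi sharp hsharp B hB φ hφ
end

section
/- Let F be algebraically closed with char F ≠ 2, char F ∤ n+1, n ≥ 2, and Q = Q(n) the Lie superalgebra. Every automorphism ψ of the Lie algebra Q⁰ = 𝔰𝔩(n+1,F) extends to an automorphism of the Lie superalgebra Q; i.e. the restriction map Aut(Q) → Aut(Q⁰) is surjective. -/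
open Matrix

/-!
Extend `ψ` by `φ (a, x) = (ψ a, c • ψ x)` for a scalar `c ≠ 0`. The only nontrivial condition
is on the odd-odd bracket, `c² (ψ x ψ y + ψ y ψ x)^♯ = ψ ((x y + y x)^♯)`.
Both `(x, y) ↦ (x y + y x)^♯` and `(x, y) ↦ ψ⁻¹ ((ψ x ψ y + ψ y ψ x)^♯)` are symmetric
`ad`-invariant bilinear maps `𝔰𝔩 × 𝔰𝔩 → 𝔰𝔩`, and for `n + 1 ≥ 3` such a map `N` is determined by
its value at `(E₀₁, E₁₂)`: if `N` vanishes there, a weight argument for the diagonal torus together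
with invariance under the `E_ij` gives `N (E₀₁, ·) = 0`, and `{x | N (x, ·) = 0}` is an ideal,
hence all of `𝔰𝔩`. So the second map is `λ ≠ 0` times the first, and `c = λ^(-1/2)` exists
because `F` is algebraically closed.
-/

theorem Fin.exists_ne_ne {m : ℕ} (hm : 3 ≤ m) (a b : Fin m) : ∃ c, c ≠ a ∧ c ≠ b := by
  by_contra! h
  have h0 := h ⟨0, by omega⟩
  have h1 := h ⟨1, by omega⟩
  have h2 := h ⟨2, by omega⟩
  simp only [ne_eq, Fin.ext_iff] at h0 h1 h2
  omega

theorem Fin.exists_pairwise_ne {m : ℕ} (hm : 3 ≤ m) :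
    ∃ i j k : Fin m, i ≠ j ∧ j ≠ k ∧ i ≠ k :=
  ⟨⟨0, by omega⟩, ⟨1, by omega⟩, ⟨2, by omega⟩, by simp [Fin.ext_iff], by simp [Fin.ext_iff],
    by simp [Fin.ext_iff]⟩

theorem Matrix.eq_sum_single_of_trace_eq_zero {F : Type*} [Field F] {m : ℕ} [NeZero m]
    {Y : Matrix (Fin m) (Fin m) F} (hY : trace Y = 0) :
    Y = ∑ p, ∑ q,
      if p = q then single p p (Y p p) - single 0 0 (Y p p) else single p q (Y p q) := by
  have hterm : ∀ p q, (if p = q then single p p (Y p p) - single 0 0 (Y p p)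
      else single p q (Y p q)) = single p q (Y p q) - if p = q then single 0 0 (Y p p) else 0 := by
    intro p q
    split_ifs with h
    · rw [h]
    · rw [sub_zero]
  have h0 : ∑ p, single (0 : Fin m) (0 : Fin m) (Y p p) = 0 := by
    ext a b
    simp only [Matrix.sum_apply, single_apply, Matrix.zero_apply]
    split_ifs
    · exact hY
    · exact Finset.sum_const_zero
  simp only [hterm, Finset.sum_sub_distrib, Finset.sum_ite_eq, Finset.mem_univ, if_true,
    ← matrix_eq_sum_single]
  rw [h0, sub_zero]

section AdInvariant

variable {R L : Type*} [CommRing R] [LieRing L] [LieAlgebra R L]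

def IsAdInvariant (N : L →ₗ[R] L →ₗ[R] L) : Prop :=
  ∀ a x y : L, ⁅a, N x y⁆ = N ⁅a, x⁆ y + N x ⁅a, y⁆

namespace IsAdInvariant

variable {N N' : L →ₗ[R] L →ₗ[R] L}

theorem sub (hN : IsAdInvariant N) (hN' : IsAdInvariant N') : IsAdInvariant (N - N') := by
  intro a x y
  simp only [LinearMap.sub_apply, lie_sub, hN a, hN' a]
  abel

theorem smul (hN : IsAdInvariant N) (c : R) : IsAdInvariant (c • N) := by
  intro a x y
  simp only [LinearMap.smul_apply, lie_smul, hN a, smul_add]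

theorem conj (hN : IsAdInvariant N) (e : L ≃ₗ⁅R⁆ L) :
    IsAdInvariant ((N.compl₁₂ (e : L →ₗ[R] L) (e : L →ₗ[R] L)).compr₂ (e.symm : L →ₗ[R] L)) := by
  intro a x y
  simp only [LinearMap.compr₂_apply, LinearMap.compl₁₂_apply, LinearEquiv.coe_coe,
    LieEquiv.coe_toLinearEquiv]
  apply e.injective
  simp [hN (e a), LieEquiv.map_lie]

theorem map_lie_eq_zero (hN : IsAdInvariant N) {x : L} (hx : N x = 0) (a : L) :
    N ⁅a, x⁆ = 0 := by
  ext y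
  simpa [hx] using (hN a x y).symm

theorem map_lie_eq_zero' (hN : IsAdInvariant N) {x : L} (hx : N x = 0) (a : L) :
    N ⁅x, a⁆ = 0 := by
  rw [← lie_skew, map_neg, hN.map_lie_eq_zero hx, neg_zero]

end IsAdInvariant

end AdInvariant

namespace LieAlgebra.SpecialLinear

variable {F : Type*} [Field F] {m : ℕ}

local notation "𝔤𝔩" => Matrix (Fin m) (Fin m) F
local notation "𝔰𝔩" => sl (Fin m) F

theorem trace_val (X : 𝔰𝔩) : trace (X : 𝔤𝔩) = 0 := X.2

theorem eq_sum_single [NeZero m] (X : 𝔰𝔩) :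
    X = ∑ p, ∑ q, if h : p = q then singleSubSingle p 0 ((X : 𝔤𝔩) p p)
      else single p q h ((X : 𝔤𝔩) p q) := by
  apply Subtype.ext
  simpa only [AddSubmonoidClass.coe_finsetSum, apply_dite Subtype.val, val_single,
    val_singleSubSingle, dite_eq_ite] using Matrix.eq_sum_single_of_trace_eq_zero (trace_val X)

theorem linearMap_ext [NeZero m] {V : Type*} [AddCommGroup V] [Module F V] {f g : 𝔰𝔩 →ₗ[F] V}
    (hE : ∀ i j (h : i ≠ j), f (single i j h 1) = g (single i j h 1))
    (hH : ∀ i j, f (singleSubSingle i j 1) = g (singleSubSingle i j 1)) : f = g := by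
  ext X
  rw [eq_sum_single X]
  simp only [map_sum]
  refine Finset.sum_congr rfl fun p _ => Finset.sum_congr rfl fun q _ => ?_
  split_ifs with h
  · rw [← mul_one ((X : 𝔤𝔩) p p), ← smul_eq_mul, map_smul, map_smul, map_smul, hH]
  · rw [← mul_one ((X : 𝔤𝔩) p q), ← smul_eq_mul, map_smul, map_smul, map_smul, hE]

theorem singleSubSingle_self (i : Fin m) : singleSubSingle i i (1 : F) = 0 := by
  ext1
  simp

theorem singleSubSingle_swap (i j : Fin m) :
    singleSubSingle j i (1 : F) = -singleSubSingle i j 1 := by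
  ext1
  simp

theorem single_one_ne_zero {i j : Fin m} (hij : i ≠ j) : single i j hij (1 : F) ≠ 0 := fun h => by
  simpa using congrArg (fun Y : 𝔰𝔩 => (Y : 𝔤𝔩) i j) h

theorem lie_single_single {i j k : Fin m} (hij : i ≠ j) (hjk : j ≠ k) (hik : i ≠ k) :
    ⁅single i j hij (1 : F), single j k hjk (1 : F)⁆ = single i k hik 1 := by
  ext1
  rw [sl_bracket]
  simp [Matrix.single_mul_single_of_ne _ _ _ _ hik.symm]

theorem lie_single_single_of_ne {i j k l : Fin m} (hij : i ≠ j) (hkl : k ≠ l) (hjk : j ≠ k)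
    (hli : l ≠ i) : ⁅single i j hij (1 : F), single k l hkl (1 : F)⁆ = 0 := by
  ext1
  rw [sl_bracket]
  simp [Matrix.single_mul_single_of_ne _ _ _ _ hjk, Matrix.single_mul_single_of_ne _ _ _ _ hli]

theorem lie_single_single_swap {i j : Fin m} (hij : i ≠ j) :
    ⁅single i j hij (1 : F), single j i hij.symm (1 : F)⁆ = singleSubSingle i j 1 := by
  ext1
  rw [sl_bracket]
  simp

theorem lie_single_apply_same {a b : Fin m} (hab : a ≠ b) (X : 𝔰𝔩) :
    ((⁅single a b hab (1 : F), X⁆ : 𝔰𝔩) : 𝔤𝔩) a b = (X : 𝔤𝔩) b b - (X : 𝔤𝔩) a a := by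
  rw [sl_bracket, val_single, Matrix.sub_apply, single_mul_apply_same, mul_single_apply_same,
    one_mul, mul_one]

theorem eq_smul_single_of_apply_ne_zero {X : 𝔰𝔩} {a b : Fin m} (hab : a ≠ b)
    (h : ∀ p q, (X : 𝔤𝔩) p q ≠ 0 → p = a ∧ q = b) : X = (X : 𝔤𝔩) a b • single a b hab 1 := by
  ext1; ext p q
  rw [SetLike.val_smul, Matrix.smul_apply, val_single, single_apply, smul_eq_mul]
  by_cases hpq : (X : 𝔤𝔩) p q = 0
  · split_ifs with h'
    · rw [h'.1, h'.2, hpq, mul_one]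
    · rw [hpq, mul_zero]
  · obtain ⟨rfl, rfl⟩ := h p q hpq
    simp

theorem eq_zero_of_diag_eq [NeZero (m : F)] {X : 𝔰𝔩} (hoff : ∀ p q, p ≠ q → (X : 𝔤𝔩) p q = 0)
    (c : F) (hdiag : ∀ t, (X : 𝔤𝔩) t t = c) : X = 0 := by
  have hc : (m : F) * c = 0 := by
    simpa [trace, hdiag] using trace_val X
  have hc0 : c = 0 := (mul_eq_zero.mp hc).resolve_left (NeZero.ne _)
  ext1; ext p q
  rcases eq_or_ne p q with rfl | hpq
  · simp [hdiag, hc0]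
  · simp [hoff p q hpq]

section Weights

def root (i j : Fin m) : Fin m → F := Pi.single i 1 - Pi.single j 1

theorem sum_root (i j : Fin m) : ∑ t, root i j t = (0 : F) := by
  simp [root, Finset.sum_sub_distrib]

theorem root_add_root (i j k : Fin m) : root i j + root j k = (root i k : Fin m → F) := by
  simp [root]

theorem root_apply_sub_root_apply (a b p q : Fin m) :
    root a b p - root a b q = (root p q a - root p q b : F) := by
  simp only [root, Pi.sub_apply, Pi.single_apply, eq_comm (a := p), eq_comm (a := q)]
  ring

theorem root_apply_eq_row (h2 : (2 : F) ≠ 0) {p q t : Fin m}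
    (h : root p q t = (1 : F) ∨ root p q t = (-2 : F)) : p = t := by
  by_contra hpt
  simp only [root, Pi.sub_apply, Pi.single_apply, if_neg (Ne.symm hpt)] at h
  split_ifs at h <;> grind

theorem root_apply_eq_col (h2 : (2 : F) ≠ 0) {p q t : Fin m}
    (h : root p q t = (-1 : F) ∨ root p q t = (2 : F)) : q = t := by
  by_contra hqt
  simp only [root, Pi.sub_apply, Pi.single_apply, if_neg (Ne.symm hqt)] at h
  split_ifs at h <;> grind

theorem val_singleSubSingle_one (a b : Fin m) :
    (singleSubSingle a b (1 : F) : 𝔤𝔩) = diagonal (root a b) := by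
  rw [val_singleSubSingle, ← diagonal_single, ← diagonal_single, diagonal_sub]
  rfl

theorem lie_singleSubSingle_apply (a b p q : Fin m) (X : 𝔰𝔩) :
    ((⁅singleSubSingle a b (1 : F), X⁆ : 𝔰𝔩) : 𝔤𝔩) p q =
      (root a b p - root a b q) * (X : 𝔤𝔩) p q := by
  rw [sl_bracket, val_singleSubSingle_one, Matrix.sub_apply, diagonal_mul, mul_diagonal]
  ring

/- The `singleSubSingle a b` span the diagonal of `𝔰𝔩`, so they only see the differences
`w a - w b`: a weight is determined up to an additive constant, which `∑ t, w t = 0` fixes. -/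
def IsWeightVector (w : Fin m → F) (X : 𝔰𝔩) : Prop :=
  ∀ a b : Fin m, ⁅singleSubSingle a b (1 : F), X⁆ = (w a - w b) • X

theorem isWeightVector_single {i j : Fin m} (hij : i ≠ j) :
    IsWeightVector (root i j) (single i j hij (1 : F)) := by
  intro a b
  ext1; ext p q
  rw [lie_singleSubSingle_apply, SetLike.val_smul, Matrix.smul_apply, val_single, single_apply,
    smul_eq_mul]
  split_ifs with h
  · rw [← h.1, ← h.2, root_apply_sub_root_apply]
  · rw [mul_zero, mul_zero]

theorem isWeightVector_apply {N : 𝔰𝔩 →ₗ[F] 𝔰𝔩 →ₗ[F] 𝔰𝔩} (hN : IsAdInvariant N)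
    {w w' : Fin m → F} {x y : 𝔰𝔩} (hx : IsWeightVector w x) (hy : IsWeightVector w' y) :
    IsWeightVector (w + w') (N x y) := by
  intro a b
  rw [hN, hx, hy, map_smul, LinearMap.smul_apply, map_smul, ← add_smul, Pi.add_apply,
    Pi.add_apply]
  congr 1
  ring

theorem isWeightVector_apply_single_single {N : 𝔰𝔩 →ₗ[F] 𝔰𝔩 →ₗ[F] 𝔰𝔩} (hN : IsAdInvariant N)
    {i j p q : Fin m} (hij : i ≠ j) (hpq : p ≠ q) :
    IsWeightVector (root i j + root p q) (N (single i j hij 1) (single p q hpq 1)) :=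
  isWeightVector_apply hN (isWeightVector_single hij) (isWeightVector_single hpq)

namespace IsWeightVector

variable {w : Fin m → F} {X : sl (Fin m) F} {p q : Fin m}

theorem eq_root [NeZero (m : F)] (hX : IsWeightVector w X) (hw : ∑ t, w t = 0)
    (hpq : (X : 𝔤𝔩) p q ≠ 0) : w = root p q := by
  have hconst : ∀ a b, w a - root p q a = w b - root p q b := by
    intro a b
    have h := congrArg (fun Y : 𝔰𝔩 => (Y : 𝔤𝔩) p q) (hX a b)
    simp only [lie_singleSubSingle_apply, SetLike.val_smul, Matrix.smul_apply, smul_eq_mul,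
      root_apply_sub_root_apply] at h
    linear_combination -mul_right_cancel₀ hpq h
  funext b
  have hsum := Finset.sum_congr rfl fun a (_ : a ∈ Finset.univ) => hconst a b
  rw [Finset.sum_sub_distrib, hw, sum_root, sub_self, Finset.sum_const, Finset.card_univ,
    Fintype.card_fin, nsmul_eq_mul] at hsum
  linear_combination (mul_eq_zero.mp hsum.symm).resolve_left (NeZero.ne _)

variable [NeZero (m : F)]

theorem row_eq (h2 : (2 : F) ≠ 0) (hX : IsWeightVector w X) (hw : ∑ t, w t = 0)
    (hpq : (X : 𝔤𝔩) p q ≠ 0) {t : Fin m} (ht : w t = 1 ∨ w t = -2) : p = t :=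
  root_apply_eq_row h2 (by rwa [← hX.eq_root hw hpq])

theorem col_eq (h2 : (2 : F) ≠ 0) (hX : IsWeightVector w X) (hw : ∑ t, w t = 0)
    (hpq : (X : 𝔤𝔩) p q ≠ 0) {t : Fin m} (ht : w t = -1 ∨ w t = 2) : q = t :=
  root_apply_eq_col h2 (by rwa [← hX.eq_root hw hpq])

theorem eq_smul_single (h2 : (2 : F) ≠ 0) {a b : Fin m} (hab : a ≠ b)
    (hX : IsWeightVector (root a b) X) : X = (X : 𝔤𝔩) a b • single a b hab (1 : F) :=
  eq_smul_single_of_apply_ne_zero hab fun _ _ hpq =>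
    ⟨hX.row_eq h2 (sum_root a b) hpq (.inl (by simp [root, hab.symm])),
      hX.col_eq h2 (sum_root a b) hpq (.inl (by simp [root, hab]))⟩

theorem eq_zero_of_apply_eq_one (h2 : (2 : F) ≠ 0) (hX : IsWeightVector w X)
    (hw : ∑ t, w t = 0) {a b : Fin m} (hab : a ≠ b) (ha : w a = 1) (hb : w b = 1) : X = 0 := by
  ext1; ext p q
  by_contra hpq
  exact hab ((hX.row_eq h2 hw hpq (.inl ha)).symm.trans (hX.row_eq h2 hw hpq (.inl hb)))

theorem eq_zero_of_apply_eq_neg_one (h2 : (2 : F) ≠ 0) (hX : IsWeightVector w X)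
    (hw : ∑ t, w t = 0) {a b : Fin m} (hab : a ≠ b) (ha : w a = -1) (hb : w b = -1) : X = 0 := by
  ext1; ext p q
  by_contra hpq
  exact hab ((hX.col_eq h2 hw hpq (.inl ha)).symm.trans (hX.col_eq h2 hw hpq (.inl hb)))

theorem apply_eq_zero_of_ne (hX : IsWeightVector 0 X) (hpq : p ≠ q) : (X : 𝔤𝔩) p q = 0 := by
  by_contra h
  have := congrFun (hX.eq_root (by simp) h) p
  simp [root, hpq] at this

end IsWeightVector

end Weights

section Jordan

variable [NeZero (m : F)]

/-- The paper's `a ↦ a^♯`. -/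
def tracelessPart : 𝔤𝔩 →ₗ[F] 𝔰𝔩 :=
  LinearMap.codRestrict _ (LinearMap.id - (m : F)⁻¹ • (traceLinearMap (Fin m) F F).smulRight 1)
    fun X => by
      change trace (X - (m : F)⁻¹ • (trace X • 1)) = 0
      rw [trace_sub, trace_smul, trace_smul, trace_one, Fintype.card_fin, smul_eq_mul, smul_eq_mul,
        mul_comm (trace X), inv_mul_cancel_left₀ (NeZero.ne _), sub_self]

theorem val_tracelessPart (X : 𝔤𝔩) :
    (tracelessPart X : 𝔤𝔩) = X - ((m : F)⁻¹ * trace X) • 1 := by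
  change X - (m : F)⁻¹ • (trace X • 1) = _
  rw [smul_smul]

theorem tracelessPart_of_trace_eq_zero {X : 𝔤𝔩} (hX : trace X = 0) :
    (tracelessPart X : 𝔤𝔩) = X := by
  rw [val_tracelessPart, hX, mul_zero, zero_smul, sub_zero]

theorem lie_tracelessPart (a : 𝔰𝔩) (X : 𝔤𝔩) :
    ⁅a, tracelessPart X⁆ = tracelessPart ((a : 𝔤𝔩) * X - X * (a : 𝔤𝔩)) := by
  ext1
  rw [sl_bracket, val_tracelessPart, tracelessPart_of_trace_eq_zero (by
    rw [trace_sub, trace_mul_comm, sub_self])]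
  simp only [mul_sub, sub_mul, mul_smul_comm, smul_mul_assoc, mul_one, one_mul]
  abel

def jordan : 𝔰𝔩 →ₗ[F] 𝔰𝔩 →ₗ[F] 𝔰𝔩 :=
  LinearMap.mk₂ F (fun x y => tracelessPart ((x : 𝔤𝔩) * (y : 𝔤𝔩) + (y : 𝔤𝔩) * (x : 𝔤𝔩)))
    (fun x x' y => by simp only [AddMemClass.coe_add, add_mul, mul_add, ← map_add]; abel_nf)
    (fun c x y => by
      simp only [SetLike.val_smul, smul_mul_assoc, mul_smul_comm, ← smul_add, map_smul])
    (fun x y y' => by simp only [AddMemClass.coe_add, add_mul, mul_add, ← map_add]; abel_nf)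
    (fun c x y => by
      simp only [SetLike.val_smul, smul_mul_assoc, mul_smul_comm, ← smul_add, map_smul])

theorem jordan_apply (x y : 𝔰𝔩) :
    jordan x y = tracelessPart ((x : 𝔤𝔩) * (y : 𝔤𝔩) + (y : 𝔤𝔩) * (x : 𝔤𝔩)) :=
  rfl

theorem jordan_comm (x y : 𝔰𝔩) : jordan x y = jordan y x := by
  rw [jordan_apply, jordan_apply, add_comm]

theorem isAdInvariant_jordan : IsAdInvariant (jordan : 𝔰𝔩 →ₗ[F] 𝔰𝔩 →ₗ[F] 𝔰𝔩) := by
  intro a x y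
  rw [jordan_apply, jordan_apply, jordan_apply, lie_tracelessPart, ← map_add, sl_bracket,
    sl_bracket]
  congr 1
  noncomm_ring

theorem jordan_single_single {i j k : Fin m} (hij : i ≠ j) (hjk : j ≠ k) (hik : i ≠ k) :
    jordan (single i j hij (1 : F)) (single j k hjk 1) = single i k hik 1 := by
  ext1
  rw [jordan_apply, val_single, val_single, val_single,
    Matrix.single_mul_single_of_ne _ _ _ _ hik.symm, add_zero, single_mul_single_same, mul_one,
    tracelessPart_of_trace_eq_zero (trace_single_eq_of_ne _ _ _ hik)]

theorem jordan_ne_zero (hm : 3 ≤ m) : (jordan : 𝔰𝔩 →ₗ[F] 𝔰𝔩 →ₗ[F] 𝔰𝔩) ≠ 0 := by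
  obtain ⟨i, j, k, hij, hjk, hik⟩ := Fin.exists_pairwise_ne hm
  intro h
  apply single_one_ne_zero (F := F) hik
  rw [← jordan_single_single hij hjk hik, h, LinearMap.zero_apply, LinearMap.zero_apply]

end Jordan

section Uniqueness

variable {N : sl (Fin m) F →ₗ[F] sl (Fin m) F →ₗ[F] sl (Fin m) F} {i j : Fin m}

/- In characteristic 3 the weight `2 (eᵢ - eⱼ)` is the root `eⱼ - eᵢ`, so weights alone only
confine `N (E i j) (E i j)` to a multiple of `E j i`; the commutator with `E i j` kills it. -/
theorem apply_single_self [NeZero (m : F)] (h2 : (2 : F) ≠ 0) (hN : IsAdInvariant N)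
    (hij : i ≠ j) : N (single i j hij 1) (single i j hij 1) = 0 := by
  have hcomm := hN (single i j hij 1) (single i j hij 1) (single i j hij 1)
  set X := N (single i j hij 1) (single i j hij 1)
  have hX := isWeightVector_apply_single_single hN hij hij
  have hw : ∑ t, (root i j + root i j : Fin m → F) t = 0 := by
    simp [Finset.sum_add_distrib, sum_root]
  have hXji : X = (X : 𝔤𝔩) j i • single j i hij.symm 1 :=
    eq_smul_single_of_apply_ne_zero hij.symm fun p q hpq =>
      ⟨hX.row_eq h2 hw hpq (.inr (by simp [root, hij]; norm_num)),
        hX.col_eq h2 hw hpq (.inr (by simp [root, hij.symm]; norm_num))⟩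
  rw [lie_self, map_zero, LinearMap.zero_apply, zero_add, map_zero, hXji, lie_smul,
    lie_single_single_swap] at hcomm
  have hji := congrArg (fun Y : 𝔰𝔩 => (Y : 𝔤𝔩) i i) hcomm
  simp [hij.symm] at hji
  rw [hXji, hji, zero_smul]

theorem apply_single_singleSubSingle [NeZero (m : F)] (h2 : (2 : F) ≠ 0) (hN : IsAdInvariant N)
    (hNs : ∀ x y, N x y = N y x) (hij : i ≠ j) :
    N (single i j hij 1) (singleSubSingle i j 1) = 0 := by
  have h := hN (single j i hij.symm 1) (single i j hij 1) (single i j hij 1)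
  rw [apply_single_self h2 hN hij, lie_zero, lie_single_single_swap, singleSubSingle_swap,
    hNs (-_), ← two_smul F, map_neg, smul_neg] at h
  exact (smul_eq_zero.mp (neg_eq_zero.mp h.symm)).resolve_left h2

theorem apply_single_single_chain_eq_zero (hN : IsAdInvariant N) {k : Fin m} (hij : i ≠ j)
    (hjk : j ≠ k) (hN0 : N (single i j hij 1) (single j k hjk 1) = 0) {l : Fin m} (hil : i ≠ l)
    (hjl : j ≠ l) : N (single i j hij 1) (single j l hjl 1) = 0 := by
  rcases eq_or_ne k l with rfl | hkl
  · exact hN0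
  have h := hN (single k l hkl 1) (single i j hij 1) (single j k hjk 1)
  rw [hN0, lie_zero, lie_single_single_of_ne hkl hij hil.symm hjk, ← lie_skew,
    lie_single_single hjk hkl hjl, map_zero, LinearMap.zero_apply, zero_add, map_neg] at h
  exact neg_eq_zero.mp h.symm

theorem apply_single_singleSubSingle_of_chain [NeZero (m : F)] (h2 : (2 : F) ≠ 0)
    (hN : IsAdInvariant N) (hNs : ∀ x y, N x y = N y x) (hij : i ≠ j)
    (hC : ∀ l, i ≠ l → ∀ hjl : j ≠ l, N (single i j hij 1) (single j l hjl 1) = 0) (l : Fin m) :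
    N (single i j hij 1) (singleSubSingle i l 1) = 0 := by
  rcases eq_or_ne l i with rfl | hli
  · rw [singleSubSingle_self, map_zero]
  rcases eq_or_ne l j with rfl | hlj
  · exact apply_single_singleSubSingle h2 hN hNs hij
  have h := hN (single l j hlj 1) (single i j hij 1) (single j l hlj.symm 1)
  rw [hC l hli.symm hlj.symm, lie_zero, lie_single_single_of_ne hlj hij hij.symm hlj.symm,
    lie_single_single_swap, map_zero, LinearMap.zero_apply, zero_add] at h
  rw [← singleSubSingle_sub_singleSubSingle' i l j (1 : F), map_sub,
    apply_single_singleSubSingle h2 hN hNs hij, ← h, sub_zero]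

theorem apply_single_single_cyclic_of_chain [NeZero (m : F)] (h2 : (2 : F) ≠ 0)
    (hN : IsAdInvariant N) (hNs : ∀ x y, N x y = N y x) (hij : i ≠ j)
    (hC : ∀ l, i ≠ l → ∀ hjl : j ≠ l, N (single i j hij 1) (single j l hjl 1) = 0) {l : Fin m}
    (hli : l ≠ i) (hlj : l ≠ j) : N (single i j hij 1) (single l i hli 1) = 0 := by
  have h := hN (single i l hli.symm 1) (single i j hij 1) (single l i hli 1)
  set X := N (single i j hij 1) (single l i hli 1)
  have hX : IsWeightVector (root l j) X := by
    rw [← root_add_root l i j, add_comm]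
    exact isWeightVector_apply_single_single hN hij hli
  rw [lie_single_single_of_ne hli.symm hij hli hij.symm, lie_single_single_swap,
    apply_single_singleSubSingle_of_chain h2 hN hNs hij hC, map_zero, LinearMap.zero_apply,
    add_zero, hX.eq_smul_single h2 hlj, lie_smul, lie_single_single hli.symm hlj hij] at h
  rw [hX.eq_smul_single h2 hlj, (smul_eq_zero.mp h).resolve_right (single_one_ne_zero hij),
    zero_smul]

theorem apply_single_single_swap_of_chain [NeZero (m : F)] (h2 : (2 : F) ≠ 0)
    (hN : IsAdInvariant N) (hNs : ∀ x y, N x y = N y x) (hij : i ≠ j)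
    (hC : ∀ l, i ≠ l → ∀ hjl : j ≠ l, N (single i j hij 1) (single j l hjl 1) = 0) :
    N (single i j hij 1) (single j i hij.symm 1) = 0 := by
  have hX : IsWeightVector 0 (N (single i j hij 1) (single j i hij.symm 1)) := by
    rw [show (0 : Fin m → F) = root i j + root j i by simp [root]]
    exact isWeightVector_apply_single_single hN hij hij.symm
  refine eq_zero_of_diag_eq (fun p q => hX.apply_eq_zero_of_ne)
    ((N (single i j hij 1) (single j i hij.symm 1) : 𝔤𝔩) j j) fun t => ?_
  rcases eq_or_ne t j with rfl | htj
  · rfl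
  have h : ⁅single t j htj (1 : F), N (single i j hij 1) (single j i hij.symm 1)⁆ = 0 := by
    rcases eq_or_ne t i with rfl | hti
    · rw [hN, lie_self, map_zero, LinearMap.zero_apply, zero_add, lie_single_single_swap,
        apply_single_singleSubSingle h2 hN hNs hij]
    · rw [hN, lie_single_single_of_ne htj hij hij.symm htj.symm, map_zero, LinearMap.zero_apply,
        zero_add, lie_single_single htj hij.symm hti,
        apply_single_single_cyclic_of_chain h2 hN hNs hij hC hti htj]
  have htt := congrArg (fun Y : 𝔰𝔩 => (Y : 𝔤𝔩) t j) h
  simp only [lie_single_apply_same, ZeroMemClass.coe_zero, Matrix.zero_apply] at htt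
  linear_combination -htt

theorem apply_single_eq_zero [NeZero (m : F)] (h2 : (2 : F) ≠ 0) (hN : IsAdInvariant N)
    (hNs : ∀ x y, N x y = N y x) {k : Fin m} (hij : i ≠ j) (hjk : j ≠ k)
    (hN0 : N (single i j hij 1) (single j k hjk 1) = 0) : N (single i j hij 1) = 0 := by
  have hC : ∀ l, i ≠ l → ∀ hjl : j ≠ l, N (single i j hij 1) (single j l hjl 1) = 0 :=
    fun l hil hjl => apply_single_single_chain_eq_zero hN hij hjk hN0 hil hjl
  have hw : ∀ p q, ∑ t, (root i j + root p q : Fin m → F) t = 0 := fun p q => by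
    simp [Finset.sum_add_distrib, sum_root]
  have := NeZero.of_neZero_natCast F (n := m)
  refine linearMap_ext (fun p q hpq => ?_) (fun p q => ?_)
  · rw [LinearMap.zero_apply]
    have hX := isWeightVector_apply_single_single hN hij hpq
    rcases eq_or_ne p i with rfl | hpi
    · rcases eq_or_ne q j with rfl | hqj
      · exact apply_single_self h2 hN hij
      · exact hX.eq_zero_of_apply_eq_neg_one h2 (hw p q) hqj.symm
          (by simp [root, hij.symm, hqj.symm]) (by simp [root, hqj, hpq.symm])
    rcases eq_or_ne p j with rfl | hpj
    · rcases eq_or_ne q i with rfl | hqi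
      · exact apply_single_single_swap_of_chain h2 hN hNs hij hC
      · exact hC q hqi.symm hpq
    rcases eq_or_ne q i with rfl | hqi
    · exact apply_single_single_cyclic_of_chain h2 hN hNs hij hC hpi hpj
    · exact hX.eq_zero_of_apply_eq_one h2 (hw p q) hpi.symm
        (by simp [root, hij, hpi.symm, hqi.symm]) (by simp [root, hpi, hpj, hpq])
  · rw [← singleSubSingle_sub_singleSubSingle i p q, map_sub,
      apply_single_singleSubSingle_of_chain h2 hN hNs hij hC,
      apply_single_singleSubSingle_of_chain h2 hN hNs hij hC, sub_zero, LinearMap.zero_apply]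

theorem apply_single_eq_zero_left (hN : IsAdInvariant N) {a b c : Fin m} (hab : a ≠ b)
    (h : N (single a b hab 1) = 0) (hcb : c ≠ b) : N (single c b hcb 1) = 0 := by
  rcases eq_or_ne c a with rfl | hca
  · exact h
  rw [← lie_single_single hca hab hcb]
  exact hN.map_lie_eq_zero h _

theorem apply_single_eq_zero_right (hN : IsAdInvariant N) {a b d : Fin m} (hab : a ≠ b)
    (h : N (single a b hab 1) = 0) (had : a ≠ d) : N (single a d had 1) = 0 := by
  rcases eq_or_ne b d with rfl | hbd
  · exact h
  rw [← lie_single_single hab hbd had]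
  exact hN.map_lie_eq_zero' h _

theorem eq_zero_of_apply_single_eq_zero (hm : 3 ≤ m) (hN : IsAdInvariant N) (hij : i ≠ j)
    (h : N (single i j hij 1) = 0) : N = 0 := by
  have hE : ∀ p q (hpq : p ≠ q), N (single p q hpq 1) = 0 := fun p q hpq => by
    obtain ⟨l, hlq, hlj⟩ := Fin.exists_ne_ne hm q j
    exact apply_single_eq_zero_left hN _
      (apply_single_eq_zero_right hN _ (apply_single_eq_zero_left hN hij h hlj) hlq) hpq
  have : NeZero m := ⟨by omega⟩
  refine linearMap_ext (fun p q hpq => hE p q hpq) fun p q => ?_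
  rcases eq_or_ne p q with rfl | hpq
  · rw [singleSubSingle_self, map_zero, map_zero]
  · rw [← lie_single_single_swap hpq, hN.map_lie_eq_zero' (hE p q hpq), LinearMap.zero_apply]

end Uniqueness

theorem exists_eq_smul_jordan [NeZero (m : F)] (hm : 3 ≤ m) (h2 : (2 : F) ≠ 0)
    {T : 𝔰𝔩 →ₗ[F] 𝔰𝔩 →ₗ[F] 𝔰𝔩} (hT : IsAdInvariant T) (hTs : ∀ x y, T x y = T y x) :
    ∃ c : F, T = c • jordan := by
  obtain ⟨i, j, k, hij, hjk, hik⟩ := Fin.exists_pairwise_ne hm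
  set c := (T (single i j hij 1) (single j k hjk 1) : 𝔤𝔩) i k
  have hTijk : T (single i j hij 1) (single j k hjk 1) = c • single i k hik 1 := by
    have hX : IsWeightVector (root i k) (T (single i j hij 1) (single j k hjk 1)) := by
      rw [← root_add_root i j k]
      exact isWeightVector_apply_single_single hT hij hjk
    exact hX.eq_smul_single h2 hik
  set N : 𝔰𝔩 →ₗ[F] 𝔰𝔩 →ₗ[F] 𝔰𝔩 := T - c • jordan
  have hN : IsAdInvariant N := hT.sub (isAdInvariant_jordan.smul c)
  have hNs : ∀ x y, N x y = N y x := fun x y => by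
    simp only [N, LinearMap.sub_apply, LinearMap.smul_apply, hTs x y, jordan_comm x y]
  refine ⟨c, sub_eq_zero.mp (eq_zero_of_apply_single_eq_zero hm hN hij
    (apply_single_eq_zero h2 hN hNs hij hjk ?_))⟩
  rw [LinearMap.sub_apply, LinearMap.sub_apply, LinearMap.smul_apply, LinearMap.smul_apply,
    jordan_single_single hij hjk hik, hTijk, sub_self]

theorem exists_jordan_map_eq_smul [NeZero (m : F)] (hm : 3 ≤ m) (h2 : (2 : F) ≠ 0)
    (e : 𝔰𝔩 ≃ₗ⁅F⁆ 𝔰𝔩) : ∃ c : F, c ≠ 0 ∧ ∀ x y, jordan (e x) (e y) = c • e (jordan x y) := by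
  obtain ⟨c, hc⟩ := exists_eq_smul_jordan hm h2 (isAdInvariant_jordan.conj e)
    fun x y => by rw [LinearMap.compr₂_apply, LinearMap.compl₁₂_apply, jordan_comm]; rfl
  have key : ∀ x y, jordan (e x) (e y) = c • e (jordan x y) := fun x y => by
    simpa using congrArg (fun T : 𝔰𝔩 →ₗ[F] 𝔰𝔩 →ₗ[F] 𝔰𝔩 => e (T x y)) hc
  refine ⟨c, fun hc0 => jordan_ne_zero (F := F) hm ?_, key⟩
  ext1 x; ext1 y
  simpa [hc0] using key (e.symm x) (e.symm y)

theorem exists_sq_smul_jordan_map_eq [IsAlgClosed F] [NeZero (m : F)] (hm : 3 ≤ m)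
    (h2 : (2 : F) ≠ 0) (e : 𝔰𝔩 ≃ₗ⁅F⁆ 𝔰𝔩) :
    ∃ c : F, c ≠ 0 ∧ ∀ x y, c ^ 2 • jordan (e x) (e y) = e (jordan x y) := by
  obtain ⟨l, hl0, hl⟩ := exists_jordan_map_eq_smul hm h2 e
  obtain ⟨c, hc⟩ := IsAlgClosed.exists_pow_nat_eq l⁻¹ two_pos
  refine ⟨c, fun h => hl0 (by simpa [h] using hc.symm), fun x y => ?_⟩
  rw [hl, smul_smul, hc, inv_mul_cancel₀ hl0, one_smul]

noncomputable def lieEquivOfMap (ψ : 𝔤𝔩 → 𝔤𝔩) (hadd : ∀ a b, ψ (a + b) = ψ a + ψ b)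
    (hsmul : ∀ (c : F) a, ψ (c • a) = c • ψ a) (hsl : ∀ a, trace a = 0 → trace (ψ a) = 0)
    (hsurj : ∀ b, trace b = 0 → ∃ a, trace a = 0 ∧ ψ a = b)
    (hinj : ∀ a b, trace a = 0 → trace b = 0 → ψ a = ψ b → a = b)
    (hlie : ∀ a b, trace a = 0 → trace b = 0 → ψ (a * b - b * a) = ψ a * ψ b - ψ b * ψ a) :
    𝔰𝔩 ≃ₗ⁅F⁆ 𝔰𝔩 :=
  LieEquiv.ofBijective
    { toFun := fun x => ⟨ψ x, hsl x x.2⟩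
      map_add' := fun x y => Subtype.ext (hadd x y)
      map_smul' := fun c x => Subtype.ext (hsmul c x)
      map_lie' := fun {x y} => Subtype.ext (hlie x y x.2 y.2) }
    ⟨fun x y h => Subtype.ext (hinj x y x.2 y.2 (congrArg Subtype.val h)), fun y =>
      let ⟨a, ha, hay⟩ := hsurj y y.2
      ⟨⟨a, ha⟩, Subtype.ext hay⟩⟩

end LieAlgebra.SpecialLinear

theorem QMat.map_bracket {F : Type*} [Field F] {n : ℕ}
    {sharp : Matrix (Fin (n + 1)) (Fin (n + 1)) F → Matrix (Fin (n + 1)) (Fin (n + 1)) F}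
    (hsharp : ∀ (r : F) a, sharp (r • a) = r • sharp a) {B : QMat F n → QMat F n → QMat F n}
    (hB : ∀ p q, B p q = (p.1 * q.1 - q.1 * p.1 + sharp (p.2 * q.2 + q.2 * p.2),
      p.1 * q.2 - q.2 * p.1 + p.2 * q.1 - q.1 * p.2))
    {ψ : Matrix (Fin (n + 1)) (Fin (n + 1)) F → Matrix (Fin (n + 1)) (Fin (n + 1)) F}
    (hadd : ∀ a b, ψ (a + b) = ψ a + ψ b)
    (hlie : ∀ a b, trace a = 0 → trace b = 0 → ψ (a * b - b * a) = ψ a * ψ b - ψ b * ψ a)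
    {c : F} (hc : ∀ x y, trace x = 0 → trace y = 0 →
      c ^ 2 • sharp (ψ x * ψ y + ψ y * ψ x) = ψ (sharp (x * y + y * x)))
    {p q : QMat F n} (hp1 : trace p.1 = 0) (hp2 : trace p.2 = 0) (hq1 : trace q.1 = 0)
    (hq2 : trace q.2 = 0) :
    (ψ (B p q).1, c • ψ (B p q).2) = B (ψ p.1, c • ψ p.2) (ψ q.1, c • ψ q.2) := by
  rw [hB, hB]
  refine Prod.ext ?_ ?_
  · dsimp only
    rw [hadd, hlie _ _ hp1 hq1, ← hc _ _ hp2 hq2, ← hsharp]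
    simp only [smul_mul_smul_comm, ← sq, smul_add]
  · dsimp only
    rw [add_sub_assoc, hadd, hlie _ _ hp1 hq2, hlie _ _ hp2 hq1]
    simp only [smul_add, smul_sub, mul_smul_comm, smul_mul_assoc, add_sub_assoc]

open LieAlgebra.SpecialLinear

/-- Every automorphism `ψ` of the Lie algebra `Q⁰ = 𝔰𝔩(n+1,F)` extends to
an automorphism `φ` of the Lie superalgebra `Q = Q(n)`; i.e. the restriction map
`Aut(Q) → Aut(Q⁰)` is surjective. -/
theorem stmt_13 (F : Type*) [Field F] [IsAlgClosed F] (h2 : ringChar F ≠ 2)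
    (n : ℕ) (hn : 2 ≤ n) (hchar : (n + 1 : F) ≠ 0)
    (sharp : Matrix (Fin (n + 1)) (Fin (n + 1)) F → Matrix (Fin (n + 1)) (Fin (n + 1)) F)
    (hsharp : ∀ a, sharp a = a - ((n + 1 : F)⁻¹ * Matrix.trace a) • (1 : Matrix (Fin (n + 1)) (Fin (n + 1)) F))
    (B : QMat F n → QMat F n → QMat F n)
    (hB : ∀ p q, B p q = (p.1 * q.1 - q.1 * p.1 + sharp (p.2 * q.2 + q.2 * p.2),
      p.1 * q.2 - q.2 * p.1 + p.2 * q.1 - q.1 * p.2))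
    -- ψ is an automorphism of the Lie algebra 𝔰𝔩(n+1,F):
    (ψ : Matrix (Fin (n + 1)) (Fin (n + 1)) F → Matrix (Fin (n + 1)) (Fin (n + 1)) F)
    (hψadd : ∀ a b, ψ (a + b) = ψ a + ψ b) (hψsmul : ∀ (c : F) a, ψ (c • a) = c • ψ a)
    (hψsl : ∀ a, Matrix.trace a = 0 → Matrix.trace (ψ a) = 0)
    (hψsurj : ∀ b, Matrix.trace b = 0 → ∃ a, Matrix.trace a = 0 ∧ ψ a = b)
    (hψinj : ∀ a b, Matrix.trace a = 0 → Matrix.trace b = 0 → ψ a = ψ b → a = b)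
    (hψbr : ∀ a b, Matrix.trace a = 0 → Matrix.trace b = 0 →
      ψ (a * b - b * a) = ψ a * ψ b - ψ b * ψ a) :
    -- there is an automorphism φ of Q restricting to ψ on Q⁰:
    ∃ φ : QMat F n → QMat F n,
      (∀ p q, φ (p + q) = φ p + φ q) ∧ (∀ (c : F) p, φ (c • p) = c • φ p) ∧
      (∀ p : QMat F n, Matrix.trace p.1 = 0 → Matrix.trace p.2 = 0 →
        Matrix.trace (φ p).1 = 0 ∧ Matrix.trace (φ p).2 = 0) ∧
      (∀ q : QMat F n, Matrix.trace q.1 = 0 → Matrix.trace q.2 = 0 →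
        ∃ p : QMat F n, Matrix.trace p.1 = 0 ∧ Matrix.trace p.2 = 0 ∧ φ p = q) ∧
      (∀ p q : QMat F n, Matrix.trace p.1 = 0 → Matrix.trace p.2 = 0 →
        Matrix.trace q.1 = 0 → Matrix.trace q.2 = 0 → φ p = φ q → p = q) ∧
      (∀ a, Matrix.trace a = 0 → (φ (a, 0)).2 = 0) ∧
      (∀ x, Matrix.trace x = 0 → (φ (0, x)).1 = 0) ∧
      (∀ p q : QMat F n, Matrix.trace p.1 = 0 → Matrix.trace p.2 = 0 →
        Matrix.trace q.1 = 0 → Matrix.trace q.2 = 0 → φ (B p q) = B (φ p) (φ q)) ∧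
      (∀ a, Matrix.trace a = 0 → φ (a, 0) = (ψ a, 0)) := by
  have h2F : (2 : F) ≠ 0 := Ring.two_ne_zero h2
  have : NeZero ((n + 1 : ℕ) : F) := ⟨by rwa [Nat.cast_succ]⟩
  have hsharp' : ∀ a, sharp a = tracelessPart a := fun a => by
    rw [hsharp, val_tracelessPart, Nat.cast_succ]
  obtain ⟨c, hc0, hc⟩ := exists_sq_smul_jordan_map_eq (by omega) h2F
    (lieEquivOfMap ψ hψadd hψsmul hψsl hψsurj hψinj hψbr)
  have hψ0 : ψ 0 = 0 := by simpa using hψsmul 0 0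
  refine ⟨fun p => (ψ p.1, c • ψ p.2), fun p q => Prod.ext (hψadd _ _) ?_,
    fun r p => Prod.ext (hψsmul _ _) ?_, fun p hp1 hp2 => ⟨hψsl _ hp1, ?_⟩, fun q hq1 hq2 => ?_,
    fun p q hp1 hp2 hq1 hq2 h => Prod.ext (hψinj _ _ hp1 hq1 (congrArg Prod.fst h))
      (hψinj _ _ hp2 hq2 (smul_right_injective _ hc0 (congrArg Prod.snd h))),
    fun a _ => by simp [hψ0], fun x _ => hψ0, fun p q hp1 hp2 hq1 hq2 => ?_,
    fun a _ => by simp [hψ0]⟩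
  · simp only [Prod.snd_add, hψadd, smul_add]
  · simp only [Prod.smul_snd, hψsmul, smul_comm r c]
  · rw [trace_smul, hψsl _ hp2, smul_zero]
  · obtain ⟨a, ha, ha'⟩ := hψsurj _ hq1
    obtain ⟨b, hb, hb'⟩ := hψsurj _ hq2
    refine ⟨(a, c⁻¹ • b), ha, by rw [trace_smul, hb, smul_zero], Prod.ext ha' ?_⟩
    simp only [hψsmul, hb', smul_smul, mul_inv_cancel₀ hc0, one_smul]
  · refine QMat.map_bracket (fun r a => by rw [hsharp', hsharp', map_smul, SetLike.val_smul])
      hB hψadd hψbr (fun x y hx hy => ?_) hp1 hp2 hq1 hq2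
    rw [hsharp', hsharp']
    exact congrArg Subtype.val (hc ⟨x, hx⟩ ⟨y, hy⟩)
end

section
/- Let F be algebraically closed with char F ≠ 2, char F ∤ n+1, n ≥ 2. For every automorphism φ of the Lie superalgebra Q = Q(n) there is a scalar λ ∈ F^× with λ⁴ = 1 such that φ(x̲) = λ·(φ(x))̲ for all x ∈ Q⁰, where x ↦ x̲ is the standard isomorphism Q⁰ → Q¹. -/
open Matrix

/-!
Write `ψ` and `θ` for the even and odd diagonal blocks of `φ`, and `[x, y]₊ = (xy + yx)♯` for the
odd bracket `[x̲, y̲]`. Then `ψ` is an automorphism of `𝔰𝔩(n+1)` and `θ [a, x] = [ψ a, θ x]`, so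
`θ ∘ ψ⁻¹` is an endomorphism of the adjoint module, hence by Schur's lemma a scalar `c`, and
`ψ [x, y]₊ = c² [ψ x, ψ y]₊`. Applying `ψ` to the identity
`[x, [x, y]₊]₊ = [[x, x]₊, y]₊ - [x, [x, y]] + (an element of span {x, y})` multiplies the
anticommutator terms by `c⁴` and fixes the commutator term; comparing a matrix entry at which both
`ψ x` and `ψ y` vanish gives `c⁴ = 1`.
-/

lemma offDiag_eq_of_eq_row_of_eq_col {ι α : Type*} [Fintype ι] (hι : 2 < Fintype.card ι)
    (f : ι → ι → α)
    (hrow : ∀ i j k, i ≠ j → j ≠ k → i ≠ k → f i k = f i j)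
    (hcol : ∀ i j k, i ≠ j → j ≠ k → i ≠ k → f i k = f j k)
    {i j k l : ι} (hij : i ≠ j) (hkl : k ≠ l) : f i j = f k l := by
  have row : ∀ {i j l}, i ≠ j → i ≠ l → f i j = f i l := by
    intro i j l hij hil
    rcases eq_or_ne j l with rfl | hjl
    · rfl
    · exact (hrow i j l hij hjl hil).symm
  have col : ∀ {i k l}, i ≠ l → k ≠ l → f i l = f k l := by
    intro i k l hil hkl
    rcases eq_or_ne i k with rfl | hik
    · rfl
    · exact hcol i k l hik hkl hil
  obtain ⟨m, hmi, hmk⟩ := ENat.exists_ne_ne_of_three_le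
    (by rw [ENat.card_eq_coe_fintype_card]; exact_mod_cast hι) i k
  calc f i j = f i m := row hij hmi.symm
    _ = f k m := col hmi.symm hmk.symm
    _ = f k l := (row hkl hmk.symm).symm

lemma LinearMap.exists_comp_eq_on_of_injOn {K V W U : Type*} [Field K] [AddCommGroup V]
    [Module K V] [AddCommGroup W] [Module K W] [AddCommGroup U] [Module K U]
    (f : V →ₗ[K] W) (g : V →ₗ[K] U) (p : Submodule K V) (hf : ∀ v ∈ p, f v = 0 → v = 0) :
    ∃ h : W →ₗ[K] U, ∀ v ∈ p, h (f v) = g v := by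
  have hker : LinearMap.ker (f ∘ₗ p.subtype) = ⊥ :=
    LinearMap.ker_eq_bot'.mpr fun v hv => Subtype.ext (hf v v.2 hv)
  obtain ⟨L, hL⟩ := (f ∘ₗ p.subtype).exists_leftInverse_of_injective hker
  exact ⟨g ∘ₗ p.subtype ∘ₗ L, fun v hv => by
    simpa using congrArg (g ∘ₗ p.subtype) (LinearMap.congr_fun hL ⟨v, hv⟩)⟩

namespace Matrix

variable {ι F : Type*} [Fintype ι] [Field F]

lemma trace_mul_sub_mul (a b : Matrix ι ι F) : trace (a * b - b * a) = 0 := by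
  rw [trace_sub, trace_mul_comm, sub_self]

variable [DecidableEq ι]

def tracelessPart : Matrix ι ι F →ₗ[F] Matrix ι ι F where
  toFun M := M - ((Fintype.card ι : F)⁻¹ * trace M) • 1
  map_add' M N := by simp only [trace_add]; module
  map_smul' r M := by simp only [trace_smul, smul_eq_mul, RingHom.id_apply]; module

lemma tracelessPart_apply (M : Matrix ι ι F) :
    tracelessPart M = M - ((Fintype.card ι : F)⁻¹ * trace M) • 1 := rfl

lemma trace_tracelessPart (hcard : (Fintype.card ι : F) ≠ 0) (M : Matrix ι ι F) :
    trace (tracelessPart M) = 0 := by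
  simp only [tracelessPart_apply, trace_sub, trace_smul, trace_one, smul_eq_mul]
  field_simp
  ring

/-- The bracket `[x̲, y̲] = (xy + yx)♯` of two odd elements of `Q(n)`. -/
def oddBracket (x y : Matrix ι ι F) : Matrix ι ι F := tracelessPart (x * y + y * x)

lemma trace_oddBracket (hcard : (Fintype.card ι : F) ≠ 0) (x y : Matrix ι ι F) :
    trace (oddBracket x y) = 0 :=
  trace_tracelessPart hcard _

lemma oddBracket_smul_left (r : F) (x y : Matrix ι ι F) :
    oddBracket (r • x) y = r • oddBracket x y := by
  simp only [oddBracket, smul_mul_assoc, mul_smul_comm, ← smul_add, map_smul]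

lemma oddBracket_smul_right (r : F) (x y : Matrix ι ι F) :
    oddBracket x (r • y) = r • oddBracket x y := by
  simp only [oddBracket, smul_mul_assoc, mul_smul_comm, ← smul_add, map_smul]

/-- The bracket of `Q = 𝔰𝔩 ⊕ 𝔰𝔩̲`, a pair `(a, x)` standing for `a + x̲`. -/
def superBracket (p q : Matrix ι ι F × Matrix ι ι F) : Matrix ι ι F × Matrix ι ι F :=
  (p.1 * q.1 - q.1 * p.1 + oddBracket p.2 q.2, p.1 * q.2 - q.2 * p.1 + p.2 * q.1 - q.1 * p.2)

lemma superBracket_even_even (a b : Matrix ι ι F) :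
    superBracket (a, 0) (b, 0) = (a * b - b * a, 0) := by
  simp [superBracket, oddBracket]

lemma superBracket_even_odd (a x : Matrix ι ι F) :
    superBracket (a, 0) (0, x) = (0, a * x - x * a) := by
  simp [superBracket, oddBracket]

lemma superBracket_odd_odd (x y : Matrix ι ι F) :
    superBracket (0, x) (0, y) = (oddBracket x y, 0) := by
  simp [superBracket]

lemma oddBracket_oddBracket {x y : Matrix ι ι F} (hx : trace x = 0) (hy : trace y = 0) :
    ∃ α β : F, oddBracket x (oddBracket x y) = oddBracket (oddBracket x x) y
      - (x * (x * y - y * x) - (x * y - y * x) * x) + α • y + β • x := by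
  have h1 : trace (y * x) = trace (x * y) := trace_mul_comm y x
  have h2 : trace (x * (y * x)) = trace (x * (x * y)) := by
    rw [← mul_assoc, trace_mul_comm]
  have h3 : trace (y * (x * x)) = trace (x * (x * y)) := by
    rw [trace_mul_comm, mul_assoc]
  refine ⟨4 * ((Fintype.card ι : F)⁻¹ * trace (x * x)),
    -2 * ((Fintype.card ι : F)⁻¹ * trace (x * y + y * x)), ?_⟩
  simp only [oddBracket, tracelessPart_apply, mul_add, add_mul, mul_sub, sub_mul, mul_smul_comm,
    smul_mul_assoc, mul_one, one_mul, mul_assoc, trace_add, trace_sub, trace_smul, smul_eq_mul, hx,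
    hy, mul_zero, sub_zero, h1, h2, h3]
  module

lemma diagonal_mul_single_sub_single_mul_diagonal (d : ι → F) (i j : ι) :
    diagonal d * single i j 1 - single i j 1 * diagonal d = (d i - d j) • single i j (1 : F) := by
  ext k l
  simp only [Matrix.sub_apply, diagonal_mul, mul_diagonal, Matrix.smul_apply, single_apply,
    smul_eq_mul]
  split_ifs with h
  · simp [← h.1, ← h.2]
  · simp

lemma single_mul_single_sub_single_mul_single {i j k : ι} (hik : i ≠ k) :
    single i j (1 : F) * single j k 1 - single j k 1 * single i j 1 = single i k 1 := by
  rw [single_mul_single_same, single_mul_single_of_ne _ _ _ _ hik.symm, one_mul, sub_zero]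

lemma exists_sum_eq_zero_sub_ne_sub (h2 : (2 : F) ≠ 0) (hcard : (Fintype.card ι : F) ≠ 0)
    {i j k l : ι} (hij : i ≠ j) (hkl : ¬(k = i ∧ l = j)) :
    ∃ d : ι → F, ∑ t, d t = 0 ∧ d k - d l ≠ d i - d j := by
  by_contra! h
  set e : ι → ι → F := fun p => Pi.single p 1
  set v : ι → F := fun p => e p k - e p l - e p i + e p j
  have hv_const : ∀ p, v p = v i := by
    intro p
    have := h (e p - e i) (by simp [e, Finset.sum_sub_distrib])
    simp only [Pi.sub_apply, v, e] at this ⊢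
    linear_combination this
  have hv_sum : ∑ p, v p = 0 := by
    simp only [v, e, Finset.sum_add_distrib, Finset.sum_sub_distrib, Finset.sum_pi_single,
      Finset.mem_univ, if_true]
    ring
  have hv_i : v i = 0 := by
    rw [Finset.sum_congr rfl fun p _ => hv_const p, Finset.sum_const, Finset.card_univ,
      nsmul_eq_mul] at hv_sum
    exact (mul_eq_zero.mp hv_sum).resolve_left hcard
  have hv_j : v j = 0 := (hv_const j).trans hv_i
  -- `v i = [k = i] - [l = i] - 1` and `v j = [k = j] - [l = j] + 1` cannot both vanish.
  simp only [v, e, Pi.single_apply, hij, hij.symm, if_true, if_false] at hv_i hv_j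
  split_ifs at hv_i hv_j <;> simp_all [one_add_one_eq_two]

lemma map_single_eq_smul_single (h2 : (2 : F) ≠ 0) (hcard : (Fintype.card ι : F) ≠ 0)
    (S : Matrix ι ι F →ₗ[F] Matrix ι ι F)
    (hS : ∀ a m, trace a = 0 → trace m = 0 → S (a * m - m * a) = a * S m - S m * a)
    {i j : ι} (hij : i ≠ j) :
    S (single i j 1) = S (single i j 1) i j • single i j 1 := by
  ext k l
  by_cases hkl : k = i ∧ l = j
  · obtain ⟨rfl, rfl⟩ := hkl
    simp
  obtain ⟨d, hd, hne⟩ := exists_sum_eq_zero_sub_ne_sub h2 hcard hij hkl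
  have h := congrFun (congrFun (hS (diagonal d) (single i j 1) (by simpa [trace_diagonal])
    (trace_single_eq_of_ne i j 1 hij)) k) l
  rw [diagonal_mul_single_sub_single_mul_diagonal, map_smul] at h
  simp only [Matrix.smul_apply, Matrix.sub_apply, diagonal_mul, mul_diagonal, smul_eq_mul] at h
  have hkl_zero : S (single i j 1) k l = 0 := by
    have : (d k - d l - (d i - d j)) * S (single i j 1) k l = 0 := by linear_combination -h
    exact (mul_eq_zero.mp this).resolve_left (sub_ne_zero.mpr hne)
  rw [hkl_zero, Matrix.smul_apply, single_apply_of_ne _ _ _ _ _ (by tauto), smul_zero]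

lemma exists_map_single_eq_smul_single (hι : 2 < Fintype.card ι) (h2 : (2 : F) ≠ 0)
    (hcard : (Fintype.card ι : F) ≠ 0) (S : Matrix ι ι F →ₗ[F] Matrix ι ι F)
    (hS : ∀ a m, trace a = 0 → trace m = 0 → S (a * m - m * a) = a * S m - S m * a) :
    ∃ c : F, ∀ i j : ι, i ≠ j → S (single i j 1) = c • single i j 1 := by
  have hS' : ∀ a m, trace a = 0 → trace m = 0 → S (a * m - m * a) = S a * m - m * S a :=
    fun a m ha hm => by rw [← neg_sub, map_neg, hS m a hm ha, neg_sub]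
  have htr : ∀ {i j : ι}, i ≠ j → trace (single i j (1 : F)) = 0 :=
    fun hij => trace_single_eq_of_ne _ _ _ hij
  have hsingle : ∀ {i j : ι}, i ≠ j → S (single i j 1) = S (single i j 1) i j • single i j 1 :=
    map_single_eq_smul_single h2 hcard S hS
  have hrow : ∀ i j k : ι, i ≠ j → j ≠ k → i ≠ k →
      S (single i k 1) i k = S (single i j 1) i j := by
    intro i j k hij hjk hik
    have h := hS' _ _ (htr hij) (htr hjk)
    rw [single_mul_single_sub_single_mul_single hik, hsingle hij, smul_mul_assoc, mul_smul_comm,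
      ← smul_sub, single_mul_single_sub_single_mul_single hik] at h
    simpa using congrFun (congrFun h i) k
  have hcol : ∀ i j k : ι, i ≠ j → j ≠ k → i ≠ k →
      S (single i k 1) i k = S (single j k 1) j k := by
    intro i j k hij hjk hik
    have h := hS _ _ (htr hij) (htr hjk)
    rw [single_mul_single_sub_single_mul_single hik, hsingle hjk, smul_mul_assoc, mul_smul_comm,
      ← smul_sub, single_mul_single_sub_single_mul_single hik] at h
    simpa using congrFun (congrFun h i) k
  obtain ⟨i₀, i₁, -, hi₀₁, -, -⟩ := Fintype.two_lt_card_iff.mp hι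
  exact ⟨S (single i₀ i₁ 1) i₀ i₁, fun i j hij => by
    rw [hsingle hij, offDiag_eq_of_eq_row_of_eq_col hι _ hrow hcol hij hi₀₁]⟩

theorem exists_eq_smul_of_map_commutator (hι : 2 < Fintype.card ι) (h2 : (2 : F) ≠ 0)
    (hcard : (Fintype.card ι : F) ≠ 0) (S : Matrix ι ι F →ₗ[F] Matrix ι ι F)
    (hS_trace : ∀ m, trace m = 0 → trace (S m) = 0)
    (hS : ∀ a m, trace a = 0 → trace m = 0 → S (a * m - m * a) = a * S m - S m * a) :
    ∃ c : F, ∀ m, trace m = 0 → S m = c • m := by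
  obtain ⟨c, hc⟩ := exists_map_single_eq_smul_single hι h2 hcard S hS
  refine ⟨c, fun m hm => ?_⟩
  -- `S m - c • m` commutes with every off-diagonal matrix unit, hence is scalar; it is traceless.
  have hcomm : Pairwise fun i j => Commute (single i j (1 : F)) (S m - c • m) := by
    intro i j hij
    have htr := trace_single_eq_of_ne i j (1 : F) hij
    have h : S (single i j 1) * m - m * S (single i j 1) =
        single i j 1 * S m - S m * single i j 1 := by
      rw [← hS _ _ htr hm, ← neg_sub (m * single i j 1), map_neg, hS _ _ hm htr, neg_sub]
    rw [hc i j hij, smul_mul_assoc, mul_smul_comm] at h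
    rw [Commute, SemiconjBy, mul_sub, sub_mul, mul_smul_comm, smul_mul_assoc,
      sub_eq_sub_iff_sub_eq_sub, ← h]
  obtain ⟨μ, hμ⟩ := mem_range_scalar_of_commute_single hcomm
  have hμ0 : μ = 0 := by
    have := congrArg trace hμ
    rw [trace_sub, hS_trace m hm, trace_smul, hm, smul_zero, sub_zero, scalar_apply,
      trace_diagonal] at this
    simpa [hcard] using this
  rwa [hμ0, map_zero, eq_comm, sub_eq_zero] at hμ

theorem pow_four_eq_one_of_map_oddBracket (hι : 2 < Fintype.card ι)
    (hcard : (Fintype.card ι : F) ≠ 0) (ψ : Matrix ι ι F →ₗ[F] Matrix ι ι F) (c : F)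
    (hψ_surj : ∀ b, trace b = 0 → ∃ a, trace a = 0 ∧ ψ a = b)
    (hψ_comm : ∀ a b, trace a = 0 → trace b = 0 → ψ (a * b - b * a) = ψ a * ψ b - ψ b * ψ a)
    (hψ_odd : ∀ x y, trace x = 0 → trace y = 0 →
      ψ (oddBracket x y) = c ^ 2 • oddBracket (ψ x) (ψ y)) :
    c ^ 4 = 1 := by
  obtain ⟨i₀, i₁, i₂, h₀₁, h₀₂, h₁₂⟩ := Fintype.two_lt_card_iff.mp hι
  set X : Matrix ι ι F := single i₀ i₁ 1 + single i₁ i₂ 1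
  set Y : Matrix ι ι F := single i₂ i₀ 1
  have hX : trace X = 0 := by simp [X, trace_single_eq_of_ne, h₀₁, h₁₂]
  have hY : trace Y = 0 := trace_single_eq_of_ne _ _ _ h₀₂.symm
  obtain ⟨x, hx, hxX⟩ := hψ_surj X hX
  obtain ⟨y, hy, hyY⟩ := hψ_surj Y hY
  obtain ⟨α, β, h⟩ := oddBracket_oddBracket hx hy
  obtain ⟨α', β', h'⟩ := oddBracket_oddBracket hX hY
  replace h := congrArg ψ h
  rw [map_add, map_add, map_sub, map_smul, map_smul,
    hψ_odd _ _ hx (trace_oddBracket hcard x y), hψ_odd _ _ hx hy, oddBracket_smul_right,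
    hψ_odd _ _ (trace_oddBracket hcard x x) hy, hψ_odd _ _ hx hx, oddBracket_smul_left,
    hψ_comm _ _ hx (trace_mul_sub_mul x y), hψ_comm _ _ hx hy, smul_smul, smul_smul, hxX,
    hyY] at h
  have hXY : (X * (X * Y - Y * X) - (X * Y - Y * X) * X) i₀ i₀ = 1 := by
    simp [X, Y, mul_add, add_mul, mul_sub, sub_mul, single_mul_single_of_ne, h₀₁, h₁₂,
      h₀₁.symm, h₀₂.symm, h₁₂.symm]
  have hX₀ : X i₀ i₀ = 0 := by simp [X, h₀₁.symm]
  have hY₀ : Y i₀ i₀ = 0 := by simp [Y, h₀₂.symm]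
  have e := congrFun (congrFun h i₀) i₀
  have e' := congrFun (congrFun h' i₀) i₀
  simp only [Matrix.add_apply, Matrix.sub_apply, Matrix.smul_apply, smul_eq_mul, hXY, hX₀, hY₀]
    at e e'
  linear_combination c ^ 4 * e' - e

theorem exists_pow_four_eq_one_forall_eq_smul (hι : 2 < Fintype.card ι) (h2 : (2 : F) ≠ 0)
    (hcard : (Fintype.card ι : F) ≠ 0) (ψ θ : Matrix ι ι F →ₗ[F] Matrix ι ι F)
    (hψ_trace : ∀ a, trace a = 0 → trace (ψ a) = 0)
    (hθ_trace : ∀ x, trace x = 0 → trace (θ x) = 0)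
    (hψ_inj : ∀ a, trace a = 0 → ψ a = 0 → a = 0)
    (hψ_surj : ∀ b, trace b = 0 → ∃ a, trace a = 0 ∧ ψ a = b)
    (hψ_comm : ∀ a b, trace a = 0 → trace b = 0 → ψ (a * b - b * a) = ψ a * ψ b - ψ b * ψ a)
    (hθ_comm : ∀ a x, trace a = 0 → trace x = 0 → θ (a * x - x * a) = ψ a * θ x - θ x * ψ a)
    (hψ_odd : ∀ x y, trace x = 0 → trace y = 0 →
      ψ (oddBracket x y) = oddBracket (θ x) (θ y)) :
    ∃ c : F, c ^ 4 = 1 ∧ ∀ x, trace x = 0 → θ x = c • ψ x := by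
  obtain ⟨S, hS⟩ := ψ.exists_comp_eq_on_of_injOn θ (LinearMap.ker (traceLinearMap ι F F))
    (by simpa using hψ_inj)
  replace hS : ∀ a, trace a = 0 → S (ψ a) = θ a := fun a ha => hS a (by simpa using ha)
  have hS_trace : ∀ m, trace m = 0 → trace (S m) = 0 := by
    intro m hm
    obtain ⟨a, ha, rfl⟩ := hψ_surj m hm
    rw [hS a ha]
    exact hθ_trace a ha
  have hS_comm : ∀ a m, trace a = 0 → trace m = 0 → S (a * m - m * a) = a * S m - S m * a := by
    intro a m ha hm
    obtain ⟨b, hb, rfl⟩ := hψ_surj a ha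
    obtain ⟨u, hu, rfl⟩ := hψ_surj m hm
    rw [← hψ_comm b u hb hu, hS _ (trace_mul_sub_mul b u), hS u hu, hθ_comm b u hb hu]
  obtain ⟨c, hc⟩ := exists_eq_smul_of_map_commutator hι h2 hcard S hS_trace hS_comm
  have hθ : ∀ x, trace x = 0 → θ x = c • ψ x := fun x hx => by
    rw [← hS x hx, hc _ (hψ_trace x hx)]
  refine ⟨c, pow_four_eq_one_of_map_oddBracket hι hcard ψ c hψ_surj hψ_comm ?_, hθ⟩
  intro x y hx hy
  rw [hψ_odd x y hx hy, hθ x hx, hθ y hy, oddBracket_smul_left, oddBracket_smul_right, smul_smul,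
    sq]

end Matrix

theorem stmt_14_general (F : Type*) [Field F] (h2 : ringChar F ≠ 2)
    (n : ℕ) (hn : 2 ≤ n) (hchar : (n + 1 : F) ≠ 0)
    (sharp : Matrix (Fin (n + 1)) (Fin (n + 1)) F → Matrix (Fin (n + 1)) (Fin (n + 1)) F)
    (hsharp : ∀ a, sharp a = a - ((n + 1 : F)⁻¹ * Matrix.trace a) • (1 : Matrix (Fin (n + 1)) (Fin (n + 1)) F))
    (B : QMat F n → QMat F n → QMat F n)
    (hB : ∀ p q, B p q = (p.1 * q.1 - q.1 * p.1 + sharp (p.2 * q.2 + q.2 * p.2),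
      p.1 * q.2 - q.2 * p.1 + p.2 * q.1 - q.1 * p.2))
    -- φ is an automorphism of Q:
    (φ : QMat F n →ₗ[F] QMat F n)
    (hφQ : ∀ p : QMat F n, Matrix.trace p.1 = 0 → Matrix.trace p.2 = 0 →
      Matrix.trace (φ p).1 = 0 ∧ Matrix.trace (φ p).2 = 0)
    (hφsurj : ∀ q : QMat F n, Matrix.trace q.1 = 0 → Matrix.trace q.2 = 0 →
      ∃ p : QMat F n, Matrix.trace p.1 = 0 ∧ Matrix.trace p.2 = 0 ∧ φ p = q)
    (hφinj : ∀ p q : QMat F n, Matrix.trace p.1 = 0 → Matrix.trace p.2 = 0 →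
      Matrix.trace q.1 = 0 → Matrix.trace q.2 = 0 → φ p = φ q → p = q)
    (hφeven : ∀ a : Matrix (Fin (n + 1)) (Fin (n + 1)) F, Matrix.trace a = 0 → (φ (a, 0)).2 = 0)
    (hφodd : ∀ x : Matrix (Fin (n + 1)) (Fin (n + 1)) F, Matrix.trace x = 0 → (φ (0, x)).1 = 0)
    (hφbr : ∀ p q : QMat F n, Matrix.trace p.1 = 0 → Matrix.trace p.2 = 0 →
      Matrix.trace q.1 = 0 → Matrix.trace q.2 = 0 → φ (B p q) = B (φ p) (φ q)) :
    ∃ lam : F, lam ≠ 0 ∧ lam ^ 4 = 1 ∧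
      ∀ x : Matrix (Fin (n + 1)) (Fin (n + 1)) F, Matrix.trace x = 0 →
        φ (0, x) = (0, lam • (φ (x, 0)).1) := by
  have hcard : (Fintype.card (Fin (n + 1)) : F) ≠ 0 := by simpa using hchar
  obtain rfl : B = superBracket := funext₂ fun p q => by
    simp [hB, hsharp, superBracket, oddBracket, tracelessPart_apply]
  set ψ := LinearMap.fst F _ _ ∘ₗ φ ∘ₗ LinearMap.inl F _ (Matrix (Fin (n + 1)) (Fin (n + 1)) F)
  set θ := LinearMap.snd F _ _ ∘ₗ φ ∘ₗ LinearMap.inr F (Matrix (Fin (n + 1)) (Fin (n + 1)) F) _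
  have heven : ∀ a, trace a = 0 → φ (a, 0) = (ψ a, 0) := fun a ha => Prod.ext rfl (hφeven a ha)
  have hodd : ∀ x, trace x = 0 → φ (0, x) = (0, θ x) := fun x hx => Prod.ext (hφodd x hx) rfl
  have h0 : trace (0 : Matrix (Fin (n + 1)) (Fin (n + 1)) F) = 0 := trace_zero _ _
  obtain ⟨c, hc4, hc⟩ := exists_pow_four_eq_one_forall_eq_smul (by simp; omega)
    (Ring.two_ne_zero h2) hcard ψ θ (fun a ha => (hφQ (a, 0) ha h0).1)
    (fun x hx => (hφQ (0, x) h0 hx).2)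
    (fun a ha hψa => congrArg Prod.fst
      (hφinj (a, 0) 0 ha h0 h0 h0 (by rw [heven a ha, hψa, map_zero]; rfl)))
    (fun b hb => by
      obtain ⟨p, hp₁, hp₂, hp⟩ := hφsurj (b, 0) hb h0
      have h := congrArg Prod.fst (φ.map_add (p.1, 0) (0, p.2))
      rw [heven _ hp₁, hodd _ hp₂] at h
      exact ⟨p.1, hp₁, by simpa [hp] using h.symm⟩)
    (fun a b ha hb => congrArg Prod.fst <| by
      simpa only [superBracket_even_even, heven a ha, heven b hb]
        using hφbr (a, 0) (b, 0) ha h0 hb h0)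
    (fun a x ha hx => congrArg Prod.snd <| by
      simpa only [superBracket_even_odd, heven a ha, hodd x hx]
        using hφbr (a, 0) (0, x) ha h0 h0 hx)
    (fun x y hx hy => congrArg Prod.fst <| by
      simpa only [superBracket_odd_odd, hodd x hx, hodd y hy]
        using hφbr (0, x) (0, y) h0 hx h0 hy)
  exact ⟨c, by rintro rfl; norm_num at hc4, hc4, fun x hx => by rw [hodd x hx, hc x hx]; rfl⟩

/-- For every automorphism `φ` of the Lie superalgebra `Q = Q(n)` there is
`λ ∈ F^×` with `λ⁴ = 1` such that `φ(x̲) = λ·(φ(x))̲` for all `x ∈ Q⁰`. -/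
theorem stmt_14 (F : Type*) [Field F] [IsAlgClosed F] (h2 : ringChar F ≠ 2)
    (n : ℕ) (hn : 2 ≤ n) (hchar : (n + 1 : F) ≠ 0)
    (sharp : Matrix (Fin (n + 1)) (Fin (n + 1)) F → Matrix (Fin (n + 1)) (Fin (n + 1)) F)
    (hsharp : ∀ a, sharp a = a - ((n + 1 : F)⁻¹ * Matrix.trace a) • (1 : Matrix (Fin (n + 1)) (Fin (n + 1)) F))
    (B : QMat F n → QMat F n → QMat F n)
    (hB : ∀ p q, B p q = (p.1 * q.1 - q.1 * p.1 + sharp (p.2 * q.2 + q.2 * p.2),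
      p.1 * q.2 - q.2 * p.1 + p.2 * q.1 - q.1 * p.2))
    -- φ is an automorphism of Q:
    (φ : QMat F n →ₗ[F] QMat F n)
    (hφQ : ∀ p : QMat F n, Matrix.trace p.1 = 0 → Matrix.trace p.2 = 0 →
      Matrix.trace (φ p).1 = 0 ∧ Matrix.trace (φ p).2 = 0)
    (hφsurj : ∀ q : QMat F n, Matrix.trace q.1 = 0 → Matrix.trace q.2 = 0 →
      ∃ p : QMat F n, Matrix.trace p.1 = 0 ∧ Matrix.trace p.2 = 0 ∧ φ p = q)
    (hφinj : ∀ p q : QMat F n, Matrix.trace p.1 = 0 → Matrix.trace p.2 = 0 →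
      Matrix.trace q.1 = 0 → Matrix.trace q.2 = 0 → φ p = φ q → p = q)
    (hφeven : ∀ a : Matrix (Fin (n + 1)) (Fin (n + 1)) F, Matrix.trace a = 0 → (φ (a, 0)).2 = 0)
    (hφodd : ∀ x : Matrix (Fin (n + 1)) (Fin (n + 1)) F, Matrix.trace x = 0 → (φ (0, x)).1 = 0)
    (hφbr : ∀ p q : QMat F n, Matrix.trace p.1 = 0 → Matrix.trace p.2 = 0 →
      Matrix.trace q.1 = 0 → Matrix.trace q.2 = 0 → φ (B p q) = B (φ p) (φ q)) :
    ∃ lam : F, lam ≠ 0 ∧ lam ^ 4 = 1 ∧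
      ∀ x : Matrix (Fin (n + 1)) (Fin (n + 1)) F, Matrix.trace x = 0 →
        φ (0, x) = (0, lam • (φ (x, 0)).1) :=
  stmt_14_general F h2 n hn hchar sharp hsharp B hB φ hφQ hφsurj hφinj hφeven hφodd hφbr
end

section
/- Let G be an abelian group, F a field with char F ≠ 2, R = Mₙ(F), and Γ: R = ⊕_g R_g a G-grading of the associative algebra R. Suppose χ: G → F^× is a group homomorphism and φ: R → R is an anti-automorphism such that φ(x) = χ(g)x for all x ∈ R_g, and let h ∈ G be an element with h² = e and χ(h) = -1. If x ∈ R_a, y ∈ R_b and xy = z₀ + z₁ with z₀ ∈ R_{ab}, z₁ ∈ R_{abh} (possible since R_{ab} ⊕ R_{abh} is closed under products modulo the coarsening by ⟨h⟩), then xy - yx = 2z₁ ∈ R_{abh}. -/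
open Matrix

section GradedAntiHom

variable {F A G : Type*} [CommRing F] [Ring A] [Algebra F A] [CommGroup G]
  {ℛ : G → Submodule F A} {χ : G →* Fˣ} {φ : A → A}

theorem map_mul_eq_smul_mul_swap_of_mem
    (hφanti : ∀ x y, φ (x * y) = φ y * φ x)
    (hφχ : ∀ (g : G), ∀ x ∈ ℛ g, φ x = ((χ g : Fˣ) : F) • x)
    {a b : G} {x y : A} (hx : x ∈ ℛ a) (hy : y ∈ ℛ b) :
    φ (x * y) = ((χ (a * b) : Fˣ) : F) • (y * x) := by
  rw [hφanti, hφχ a x hx, hφχ b y hy, smul_mul_smul_comm, map_mul, Units.val_mul, mul_comm]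

theorem map_add_eq_smul_sub_of_mem
    (hφadd : ∀ x y, φ (x + y) = φ x + φ y)
    (hφχ : ∀ (g : G), ∀ x ∈ ℛ g, φ x = ((χ g : Fˣ) : F) • x)
    {h : G} (hχh : ((χ h : Fˣ) : F) = -1)
    {c : G} {z₀ z₁ : A} (hz₀ : z₀ ∈ ℛ c) (hz₁ : z₁ ∈ ℛ (c * h)) :
    φ (z₀ + z₁) = ((χ c : Fˣ) : F) • (z₀ - z₁) := by
  rw [hφadd, hφχ c z₀ hz₀, hφχ _ z₁ hz₁, map_mul, Units.val_mul, hχh, mul_neg_one, neg_smul,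
    smul_sub, sub_eq_add_neg]

theorem mul_swap_eq_sub_of_mul_eq_add
    (hφadd : ∀ x y, φ (x + y) = φ x + φ y)
    (hφanti : ∀ x y, φ (x * y) = φ y * φ x)
    (hφχ : ∀ (g : G), ∀ x ∈ ℛ g, φ x = ((χ g : Fˣ) : F) • x)
    {h : G} (hχh : ((χ h : Fˣ) : F) = -1)
    {a b : G} {x y z₀ z₁ : A} (hx : x ∈ ℛ a) (hy : y ∈ ℛ b)
    (hz : x * y = z₀ + z₁) (hz₀ : z₀ ∈ ℛ (a * b)) (hz₁ : z₁ ∈ ℛ (a * b * h)) :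
    y * x = z₀ - z₁ := by
  have hφ := (map_mul_eq_smul_mul_swap_of_mem hφanti hφχ hx hy).symm.trans
    (hz ▸ map_add_eq_smul_sub_of_mem hφadd hφχ hχh hz₀ hz₁)
  rw [← Units.smul_def, ← Units.smul_def] at hφ
  exact smul_left_cancel _ hφ

end GradedAntiHom

theorem stmt_15_general (F : Type*) [Field F] (n : ℕ)
    (G : Type*) [CommGroup G]
    (ℛ : G → Submodule F (Matrix (Fin n) (Fin n) F))
    (χ : G →* Fˣ)
    (φ : Matrix (Fin n) (Fin n) F → Matrix (Fin n) (Fin n) F)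
    (hφadd : ∀ x y, φ (x + y) = φ x + φ y)
    (hφanti : ∀ x y, φ (x * y) = φ y * φ x)
    (hφχ : ∀ (g : G), ∀ x ∈ ℛ g, φ x = ((χ g : Fˣ) : F) • x)
    (h : G) (hχh : ((χ h : Fˣ) : F) = -1)
    (a b : G) (x y z₀ z₁ : Matrix (Fin n) (Fin n) F)
    (hx : x ∈ ℛ a) (hy : y ∈ ℛ b)
    (hz : x * y = z₀ + z₁) (hz₀ : z₀ ∈ ℛ (a * b)) (hz₁ : z₁ ∈ ℛ (a * b * h)) :
    x * y - y * x = (2 : F) • z₁ ∧ x * y - y * x ∈ ℛ (a * b * h) := by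
  have hcomm : x * y - y * x = (2 : F) • z₁ := by
    rw [hz, mul_swap_eq_sub_of_mul_eq_add hφadd hφanti hφχ hχh hx hy hz hz₀ hz₁]
    module
  exact ⟨hcomm, hcomm ▸ Submodule.smul_mem _ _ hz₁⟩

/-- Key computation of Lemma 4.5: if `φ` is an anti-automorphism of
`R = Mₙ(F)` acting on each component `R_g` of a `G`-grading as the scalar `χ(g)`, and
`h² = e`, `χ(h) = -1`, then for `x ∈ R_a`, `y ∈ R_b` with `xy = z₀ + z₁`, `z₀ ∈ R_{ab}`,
`z₁ ∈ R_{abh}`, one has `xy - yx = 2z₁ ∈ R_{abh}`. -/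
theorem stmt_15 (F : Type*) [Field F] (h2 : ringChar F ≠ 2) (n : ℕ)
    (G : Type*) [CommGroup G]
    (ℛ : G → Submodule F (Matrix (Fin n) (Fin n) F))
    (hmul : ∀ (g g' : G) (x y : Matrix (Fin n) (Fin n) F),
      x ∈ ℛ g → y ∈ ℛ g' → x * y ∈ ℛ (g * g'))
    (χ : G →* Fˣ)
    (φ : Matrix (Fin n) (Fin n) F → Matrix (Fin n) (Fin n) F)
    (hφadd : ∀ x y, φ (x + y) = φ x + φ y)
    (hφanti : ∀ x y, φ (x * y) = φ y * φ x)
    (hφχ : ∀ (g : G), ∀ x ∈ ℛ g, φ x = ((χ g : Fˣ) : F) • x)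
    (h : G) (hh : h * h = 1) (hχh : ((χ h : Fˣ) : F) = -1)
    (a b : G) (x y z₀ z₁ : Matrix (Fin n) (Fin n) F)
    (hx : x ∈ ℛ a) (hy : y ∈ ℛ b)
    (hz : x * y = z₀ + z₁) (hz₀ : z₀ ∈ ℛ (a * b)) (hz₁ : z₁ ∈ ℛ (a * b * h)) :
    x * y - y * x = (2 : F) • z₁ ∧ x * y - y * x ∈ ℛ (a * b * h) :=
  stmt_15_general F n G ℛ χ φ hφadd hφanti hφχ h hχh a b x y z₀ z₁ hx hy hz hz₀ hz₁
end
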